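/- arXiv:1405.7145 — 5 statements merged into one kernel-verified Lean document; each statement's English description precedes it below -/
import Mathlib

section
/- Let D be a design of strength R−1 (R ≥ 2) with n ≥ R factors, each factor given a normalized orthogonal coding. Let U be an R-element set of factors, c ∈ U, and C = U ∖ {c}. Then factor c is completely confounded by the factors in C if and only if a_R(U) = s c − 1. -/
open Finset Matrix

/-- A design `D` (rows = runs, coordinates = factors) has strength `t` if in every
projection onto `t` factors every level combination occurs equally often. -/
def hasStrength {N n : ℕ} (s : Fin n → ℕ) (D : Fin N → ∀ i, Fin (s i)) (t : ℕ) : Prop :=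
  ∀ T : Finset (Fin n), T.card = t → ∀ x : ∀ i, Fin (s i),
    (Finset.univ.filter fun r => ∀ i ∈ T, D r i = x i).card = N / ∏ i ∈ T, s i

/-- Normalized orthogonal coding: contrast columns have zero sum and
`Cᵀ C = m • 1` (squared length `m`, pairwise orthogonal). -/
def isNOC {m : ℕ} (C : Fin m → Fin (m - 1) → ℝ) : Prop :=
  (∀ j, ∑ l, C l j = 0) ∧
    ∀ j j', ∑ l, C l j * C l j' = if j = j' then (m : ℝ) else 0

/-- Column (indexed by the tuple `j`) of the interaction model matrix of the set `U`
of factors, evaluated at run `r`. -/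
def intCol {N n : ℕ} {s : Fin n → ℕ} (C : ∀ i, Fin (s i) → Fin (s i - 1) → ℝ)
    (D : Fin N → ∀ i, Fin (s i)) (U : Finset (Fin n))
    (j : ∀ i : U, Fin (s i.1 - 1)) (r : Fin N) : ℝ :=
  ∏ i : U, C i.1 (D r i.1) (j i)

/-- Projection frequency `a_k(U)`: sum of squared column sums of the interaction
model matrix of `U`, divided by `N²`. -/
noncomputable def projFreq {N n : ℕ} {s : Fin n → ℕ}
    (C : ∀ i, Fin (s i) → Fin (s i - 1) → ℝ)
    (D : Fin N → ∀ i, Fin (s i)) (U : Finset (Fin n)) : ℝ :=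
  (∑ j : ∀ i : U, Fin (s i.1 - 1), (∑ r, intCol C D U j r) ^ 2) / (N : ℝ) ^ 2

/-- The set of columns of the full model matrix `F_C` of a set `Cset` of factors:
the all-ones column together with all columns of the interaction model matrices
of all nonempty subsets of `Cset`. -/
def fullCols {N n : ℕ} {s : Fin n → ℕ} (C : ∀ i, Fin (s i) → Fin (s i - 1) → ℝ)
    (D : Fin N → ∀ i, Fin (s i)) (Cset : Finset (Fin n)) : Set (Fin N → ℝ) :=
  {(fun _ => 1 : Fin N → ℝ)} ∪
    {v | ∃ S : Finset (Fin n), S ⊆ Cset ∧ S.Nonempty ∧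
      ∃ j : ∀ i : S, Fin (s i.1 - 1), v = fun r => intCol C D S j r}

/-- Factor `c` is completely confounded by the factors in `Cset` if every column of
its main-effects model matrix lies in the span of the columns of `F_Cset`. -/
def confounded {N n : ℕ} {s : Fin n → ℕ} (C : ∀ i, Fin (s i) → Fin (s i - 1) → ℝ)
    (D : Fin N → ∀ i, Fin (s i)) (c : Fin n) (Cset : Finset (Fin n)) : Prop :=
  ∀ j : Fin (s c - 1), (fun r => C c (D r c) j) ∈ Submodule.span ℝ (fullCols C D Cset)

section AuxiliaryLemmas

variable {N n R : ℕ} {s : Fin n → ℕ}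

/-- extend a subtype tuple of levels to a full tuple -/
def yext (hs : ∀ i, 2 ≤ s i) (T : Finset (Fin n)) (y : ∀ i : T, Fin (s i.1)) (i : Fin n) :
    Fin (s i) :=
  if h : i ∈ T then y ⟨i, h⟩ else ⟨0, by have := hs i; omega⟩

lemma filter_subtype_eq (hs : ∀ i, 2 ≤ s i) (D : Fin N → ∀ i, Fin (s i))
    (T : Finset (Fin n)) (y : ∀ i : T, Fin (s i.1)) :
    (Finset.univ.filter fun r => (fun i : T => D r i.1) = y) =
      (Finset.univ.filter fun r => ∀ i ∈ T, D r i = yext hs T y i) := by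
  apply Finset.filter_congr
  intro r _
  constructor
  · intro h i hi
    rw [yext, dif_pos hi]
    exact congrFun h ⟨i, hi⟩
  · intro h
    funext i
    have := h i.1 i.2
    rwa [yext, dif_pos i.2] at this

lemma count_base (hR : 2 ≤ R) (hs : ∀ i, 2 ≤ s i) {D : Fin N → ∀ i, Fin (s i)}
    (hD : hasStrength s D (R - 1)) (T : Finset (Fin n)) (hT : T.card = R - 1)
    (x : ∀ i, Fin (s i)) :
    ((Finset.univ.filter fun r => ∀ i ∈ T, D r i = x i).card : ℝ) * ∏ i ∈ T, (s i : ℝ) = N := by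
  classical
  have hfib : (Finset.univ : Finset (Fin N)).card =
      ∑ y : ∀ i : T, Fin (s i.1),
        ((Finset.univ : Finset (Fin N)).filter fun r => (fun i : T => D r i.1) = y).card :=
    Finset.card_eq_sum_card_fiberwise (fun r _ => Finset.mem_univ _)
  have hcnt : ∀ y : ∀ i : T, Fin (s i.1),
      ((Finset.univ : Finset (Fin N)).filter fun r => (fun i : T => D r i.1) = y).card
        = N / ∏ i ∈ T, s i := by
    intro y
    rw [filter_subtype_eq hs D T y]
    exact hD T hT _
  have hcardpi : Fintype.card (∀ i : T, Fin (s i.1)) = ∏ i ∈ T, s i := by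
    rw [Fintype.card_pi]
    simp only [Fintype.card_fin]
    rw [Finset.univ_eq_attach, Finset.prod_attach T (fun i => s i)]
  have hNdvd : N = (∏ i ∈ T, s i) * (N / ∏ i ∈ T, s i) := by
    have : (N : ℕ) = ∑ y : ∀ i : T, Fin (s i.1), N / ∏ i ∈ T, s i := by
      simpa [hcnt] using hfib
    rwa [Finset.sum_const, Finset.card_univ, hcardpi, smul_eq_mul] at this
  rw [hD T hT x]
  have hcast : (N : ℝ) = (∏ i ∈ T, (s i : ℝ)) * ((N / ∏ i ∈ T, s i : ℕ) : ℝ) := by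
    exact_mod_cast hNdvd
  rw [hcast]; ring

lemma count_real (hR : 2 ≤ R) (hn : R ≤ n) (hs : ∀ i, 2 ≤ s i)
    {D : Fin N → ∀ i, Fin (s i)} (hD : hasStrength s D (R - 1)) :
    ∀ d (T : Finset (Fin n)), T.card + d = R - 1 → ∀ x : ∀ i, Fin (s i),
      ((Finset.univ.filter fun r => ∀ i ∈ T, D r i = x i).card : ℝ) * ∏ i ∈ T, (s i : ℝ)
        = N := by
  classical
  intro d
  induction d with
  | zero => intro T hT x; exact count_base hR hs hD T (by omega) x
  | succ d ih =>
    intro T hT x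
    have hTne : Tᶜ.Nonempty := by
      rw [← Finset.card_pos, Finset.card_compl, Fintype.card_fin]
      have hle : T.card ≤ n := by simpa using Finset.card_le_univ T
      omega
    obtain ⟨i0, hi0c⟩ := hTne
    have hi0 : i0 ∉ T := Finset.mem_compl.mp hi0c
    have hfib : ((Finset.univ : Finset (Fin N)).filter fun r => ∀ i ∈ T, D r i = x i).card =
        ∑ l : Fin (s i0),
          (((Finset.univ : Finset (Fin N)).filter fun r => ∀ i ∈ T, D r i = x i).filter
            fun r => D r i0 = l).card :=
      Finset.card_eq_sum_card_fiberwise (fun r _ => Finset.mem_univ _)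
    have hsplit : ∀ l : Fin (s i0),
        (((Finset.univ : Finset (Fin N)).filter fun r => ∀ i ∈ T, D r i = x i).filter
            fun r => D r i0 = l) =
        ((Finset.univ : Finset (Fin N)).filter fun r =>
          ∀ i ∈ insert i0 T, D r i = Function.update x i0 l i) := by
      intro l
      rw [Finset.filter_filter]
      apply Finset.filter_congr
      intro r _
      simp only [Finset.forall_mem_insert, Function.update_self]
      constructor
      · rintro ⟨h1, h2⟩
        refine ⟨h2, fun i hi => ?_⟩
        have hne : i ≠ i0 := by rintro rfl; exact hi0 hi
        rw [Function.update_of_ne hne]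
        exact h1 i hi
      · rintro ⟨h2, h1⟩
        refine ⟨fun i hi => ?_, h2⟩
        have hne : i ≠ i0 := by rintro rfl; exact hi0 hi
        have := h1 i hi
        rwa [Function.update_of_ne hne] at this
    have hih : ∀ l : Fin (s i0),
        ((((Finset.univ : Finset (Fin N)).filter fun r =>
            ∀ i ∈ insert i0 T, D r i = Function.update x i0 l i).card : ℝ)) *
          ((s i0 : ℝ) * ∏ i ∈ T, (s i : ℝ)) = N := by
      intro l
      have := ih (insert i0 T) (by rw [Finset.card_insert_of_notMem hi0]; omega)
        (Function.update x i0 l)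
      rwa [Finset.prod_insert hi0] at this
    have hsi0 : (s i0 : ℝ) ≠ 0 := by
      have := hs i0; positivity
    apply mul_right_cancel₀ hsi0
    calc ((Finset.univ.filter fun r => ∀ i ∈ T, D r i = x i).card : ℝ) * (∏ i ∈ T, (s i : ℝ))
          * (s i0 : ℝ)
        = ∑ l : Fin (s i0),
            (((Finset.univ.filter fun r => ∀ i ∈ T, D r i = x i).filter
              fun r => D r i0 = l).card : ℝ) * ((s i0 : ℝ) * ∏ i ∈ T, (s i : ℝ)) := by
          rw [hfib]; push_cast; rw [Finset.sum_mul, Finset.sum_mul]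
          exact Finset.sum_congr rfl (fun l _ => by ring)
      _ = ∑ l : Fin (s i0), (N : ℝ) := by
          apply Finset.sum_congr rfl; intro l _
          rw [hsplit l]; exact hih l
      _ = (N : ℝ) * (s i0 : ℝ) := by
          rw [Finset.sum_const, Finset.card_univ, Fintype.card_fin]; ring

lemma prod_cast_ne_zero (hs : ∀ i, 2 ≤ s i) (T : Finset (Fin n)) :
    (∏ i ∈ T, (s i : ℝ)) ≠ 0 := by
  apply ne_of_gt
  apply Finset.prod_pos
  intro i _
  have := hs i
  positivity

lemma cnt_real (hR : 2 ≤ R) (hn : R ≤ n) (hs : ∀ i, 2 ≤ s i)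
    {D : Fin N → ∀ i, Fin (s i)} (hD : hasStrength s D (R - 1)) (T : Finset (Fin n))
    (hT : T.card ≤ R - 1) (y : ∀ i : T, Fin (s i.1)) :
    ((Finset.univ.filter fun r => (fun i : T => D r i.1) = y).card : ℝ) * ∏ i ∈ T, (s i : ℝ)
      = N := by
  rw [filter_subtype_eq hs D T y]
  exact count_real hR hn hs hD (R - 1 - T.card) T (by omega) _

/-- Master counting identity: for a set `T` of at most `R-1` factors and arbitrary
per-factor weights `g`, the average over runs factorizes. -/
lemma master (hR : 2 ≤ R) (hn : R ≤ n) (hs : ∀ i, 2 ≤ s i)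
    {D : Fin N → ∀ i, Fin (s i)} (hD : hasStrength s D (R - 1)) (T : Finset (Fin n))
    (hT : T.card ≤ R - 1) (g : ∀ i, Fin (s i) → ℝ) :
    ∑ r, ∏ i ∈ T, g i (D r i) =
      ((N : ℝ) / ∏ i ∈ T, (s i : ℝ)) * ∏ i ∈ T, ∑ l, g i l := by
  classical
  have h1 : ∑ r, ∏ i ∈ T, g i (D r i) =
      ∑ y : ∀ i : T, Fin (s i.1),
        ∑ r ∈ Finset.univ.filter (fun r => (fun i : T => D r i.1) = y),
          ∏ i ∈ T, g i (D r i) :=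
    (Finset.sum_fiberwise Finset.univ (fun r => fun i : T => D r i.1) _).symm
  have h2 : ∀ y : ∀ i : T, Fin (s i.1),
      ∑ r ∈ Finset.univ.filter (fun r => (fun i : T => D r i.1) = y),
        ∏ i ∈ T, g i (D r i) =
      ((Finset.univ.filter fun r => (fun i : T => D r i.1) = y).card : ℝ) *
        ∏ i : T, g i.1 (y i) := by
    intro y
    rw [Finset.sum_congr rfl (fun r hr => ?_), Finset.sum_const, nsmul_eq_mul]
    have hy : (fun i : T => D r i.1) = y := (Finset.mem_filter.mp hr).2
    rw [Finset.univ_eq_attach, ← Finset.prod_attach T (fun i => g i (D r i))]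
    exact Finset.prod_congr rfl (fun i _ => by rw [← congrFun hy i])
  have h3 : ∀ y : ∀ i : T, Fin (s i.1),
      ((Finset.univ.filter fun r => (fun i : T => D r i.1) = y).card : ℝ) =
        (N : ℝ) / ∏ i ∈ T, (s i : ℝ) := by
    intro y
    rw [eq_div_iff (prod_cast_ne_zero hs T)]
    exact cnt_real hR hn hs hD T hT y
  rw [h1]
  simp_rw [h2, h3]
  rw [← Finset.mul_sum]
  congr 1
  rw [← Fintype.prod_sum (fun (i : T) (l : Fin (s i.1)) => g i.1 l)]
  rw [Finset.univ_eq_attach, Finset.prod_attach T (fun i => ∑ l, g i l)]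

/-- extend a subtype contrast-index tuple to a total one -/
def Jext (hs : ∀ i, 2 ≤ s i) (S : Finset (Fin n)) (j : ∀ i : S, Fin (s i.1 - 1))
    (i : Fin n) : Fin (s i - 1) :=
  if h : i ∈ S then j ⟨i, h⟩ else ⟨0, by have := hs i; omega⟩

lemma Jext_mem (hs : ∀ i, 2 ≤ s i) (S : Finset (Fin n)) (j : ∀ i : S, Fin (s i.1 - 1))
    (i : S) : Jext hs S j i.1 = j i := by
  rw [Jext, dif_pos i.2]

lemma intCol_eq (hs : ∀ i, 2 ≤ s i) (C : ∀ i, Fin (s i) → Fin (s i - 1) → ℝ)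
    (D : Fin N → ∀ i, Fin (s i)) (S : Finset (Fin n)) (j : ∀ i : S, Fin (s i.1 - 1))
    (r : Fin N) :
    intCol C D S j r = ∏ i ∈ S, C i (D r i) (Jext hs S j i) := by
  rw [intCol, Finset.univ_eq_attach,
    ← Finset.prod_attach S (fun i => C i (D r i) (Jext hs S j i))]
  exact Finset.prod_congr rfl (fun i _ => by rw [Jext_mem])

lemma colsum_zero (hR : 2 ≤ R) (hn : R ≤ n) (hs : ∀ i, 2 ≤ s i)
    {D : Fin N → ∀ i, Fin (s i)} (hD : hasStrength s D (R - 1))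
    (C : ∀ i, Fin (s i) → Fin (s i - 1) → ℝ) (hC : ∀ i, isNOC (C i))
    (S : Finset (Fin n)) (hSne : S.Nonempty) (hScard : S.card ≤ R - 1)
    (j : ∀ i : S, Fin (s i.1 - 1)) :
    ∑ r, intCol C D S j r = 0 := by
  simp_rw [intCol_eq hs C D S j]
  rw [master hR hn hs hD S hScard (fun i l => C i l (Jext hs S j i))]
  obtain ⟨i0, hi0⟩ := hSne
  have h0 : ∏ i ∈ S, ∑ l, C i l (Jext hs S j i) = 0 :=
    Finset.prod_eq_zero hi0 ((hC i0).1 _)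
  rw [h0, mul_zero]

lemma dotXc_one (hR : 2 ≤ R) (hn : R ≤ n) (hs : ∀ i, 2 ≤ s i)
    {D : Fin N → ∀ i, Fin (s i)} (hD : hasStrength s D (R - 1))
    (C : ∀ i, Fin (s i) → Fin (s i - 1) → ℝ) (hC : ∀ i, isNOC (C i))
    (c : Fin n) (j : Fin (s c - 1)) :
    ∑ r, C c (D r c) j = 0 := by
  classical
  set Jd : ∀ i, Fin (s i - 1) :=
    Function.update (fun i => (⟨0, by have := hs i; omega⟩ : Fin (s i - 1))) c j with hJd
  have hJdc : Jd c = j := by simp [hJd]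
  have h1 : ∀ r, C c (D r c) j = ∏ i ∈ ({c} : Finset (Fin n)), C i (D r i) (Jd i) := by
    intro r; rw [Finset.prod_singleton, hJdc]
  simp_rw [h1]
  rw [master hR hn hs hD ({c} : Finset (Fin n)) (by simp; omega) (fun i l => C i l (Jd i))]
  have h0 : ∏ i ∈ ({c} : Finset (Fin n)), ∑ l, C i l (Jd i) = 0 := by
    rw [Finset.prod_singleton, hJdc]; exact (hC c).1 j
  rw [h0, mul_zero]

lemma dotXcXc (hR : 2 ≤ R) (hn : R ≤ n) (hs : ∀ i, 2 ≤ s i)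
    {D : Fin N → ∀ i, Fin (s i)} (hD : hasStrength s D (R - 1))
    (C : ∀ i, Fin (s i) → Fin (s i - 1) → ℝ) (hC : ∀ i, isNOC (C i))
    (c : Fin n) (j j' : Fin (s c - 1)) :
    ∑ r, C c (D r c) j * C c (D r c) j' = if j = j' then (N : ℝ) else 0 := by
  classical
  set Jd : ∀ i, Fin (s i - 1) :=
    Function.update (fun i => (⟨0, by have := hs i; omega⟩ : Fin (s i - 1))) c j with hJd
  set Jd' : ∀ i, Fin (s i - 1) :=
    Function.update (fun i => (⟨0, by have := hs i; omega⟩ : Fin (s i - 1))) c j' with hJd'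
  have hJdc : Jd c = j := by simp [hJd]
  have hJdc' : Jd' c = j' := by simp [hJd']
  have h1 : ∀ r, C c (D r c) j * C c (D r c) j' =
      ∏ i ∈ ({c} : Finset (Fin n)), C i (D r i) (Jd i) * C i (D r i) (Jd' i) := by
    intro r; rw [Finset.prod_singleton, hJdc, hJdc']
  simp_rw [h1]
  rw [master hR hn hs hD ({c} : Finset (Fin n)) (by simp; omega)
    (fun i l => C i l (Jd i) * C i l (Jd' i))]
  rw [Finset.prod_singleton, Finset.prod_singleton, hJdc, hJdc', (hC c).2 j j']
  have hsc : (s c : ℝ) ≠ 0 := by have := hs c; positivity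
  by_cases h : j = j'
  · rw [if_pos h, if_pos h]
    field_simp
  · rw [if_neg h, if_neg h, mul_zero]

lemma dotXcS (hR : 2 ≤ R) (hn : R ≤ n) (hs : ∀ i, 2 ≤ s i)
    {D : Fin N → ∀ i, Fin (s i)} (hD : hasStrength s D (R - 1))
    (C : ∀ i, Fin (s i) → Fin (s i - 1) → ℝ) (hC : ∀ i, isNOC (C i))
    (c : Fin n) (j : Fin (s c - 1)) (S : Finset (Fin n)) (hcS : c ∉ S)
    (hcard : S.card + 1 ≤ R - 1) (j'' : ∀ i : S, Fin (s i.1 - 1)) :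
    ∑ r, C c (D r c) j * intCol C D S j'' r = 0 := by
  classical
  set Jd : ∀ i, Fin (s i - 1) :=
    Function.update (fun i => (⟨0, by have := hs i; omega⟩ : Fin (s i - 1))) c j with hJd
  have hJdc : Jd c = j := by simp [hJd]
  set g : ∀ i, Fin (s i) → ℝ := fun i l =>
    (if i = c then C i l (Jd i) else 1) * (if i ∈ S then C i l (Jext hs S j'' i) else 1)
    with hg
  have h1 : ∀ r, C c (D r c) j * intCol C D S j'' r = ∏ i ∈ insert c S, g i (D r i) := by
    intro r
    rw [hg]
    simp only []
    rw [Finset.prod_mul_distrib, Finset.prod_ite_eq' (insert c S) c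
      (fun i => C i (D r i) (Jd i)), if_pos (Finset.mem_insert_self c S),
      Finset.prod_ite_mem (insert c S) S (fun i => C i (D r i) (Jext hs S j'' i)),
      Finset.inter_eq_right.mpr (Finset.subset_insert c S), hJdc,
      intCol_eq hs C D S j'']
  simp_rw [h1]
  rw [master hR hn hs hD (insert c S) (by rw [Finset.card_insert_of_notMem hcS]; omega) g]
  have h0 : ∏ i ∈ insert c S, ∑ l, g i l = 0 := by
    apply Finset.prod_eq_zero (Finset.mem_insert_self c S)
    rw [hg]
    simp only [if_pos rfl, if_neg hcS, mul_one, hJdc]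
    exact (hC c).1 j
  rw [h0, mul_zero]

lemma dotTS (hR : 2 ≤ R) (hn : R ≤ n) (hs : ∀ i, 2 ≤ s i)
    {D : Fin N → ∀ i, Fin (s i)} (hD : hasStrength s D (R - 1))
    (C : ∀ i, Fin (s i) → Fin (s i - 1) → ℝ) (hC : ∀ i, isNOC (C i))
    (T : Finset (Fin n)) (hT : T.card ≤ R - 1) (S : Finset (Fin n)) (hST : S ⊆ T)
    (hne : S ≠ T) (j' : ∀ i : T, Fin (s i.1 - 1)) (j'' : ∀ i : S, Fin (s i.1 - 1)) :
    ∑ r, intCol C D T j' r * intCol C D S j'' r = 0 := by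
  classical
  set g : ∀ i, Fin (s i) → ℝ := fun i l =>
    C i l (Jext hs T j' i) * (if i ∈ S then C i l (Jext hs S j'' i) else 1) with hg
  have h1 : ∀ r, intCol C D T j' r * intCol C D S j'' r = ∏ i ∈ T, g i (D r i) := by
    intro r
    rw [hg]
    simp only []
    rw [Finset.prod_mul_distrib,
      Finset.prod_ite_mem T S (fun i => C i (D r i) (Jext hs S j'' i)),
      Finset.inter_eq_right.mpr hST, intCol_eq hs C D S j'', intCol_eq hs C D T j']
  simp_rw [h1]
  rw [master hR hn hs hD T hT g]
  obtain ⟨i0, hi0T, hi0S⟩ := Finset.exists_of_ssubset (HasSubset.Subset.ssubset_of_ne hST hne)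
  have h0 : ∏ i ∈ T, ∑ l, g i l = 0 := by
    apply Finset.prod_eq_zero hi0T
    rw [hg]
    simp only [if_neg hi0S, mul_one]
    exact (hC i0).1 _
  rw [h0, mul_zero]

lemma dotTT (hR : 2 ≤ R) (hn : R ≤ n) (hs : ∀ i, 2 ≤ s i)
    {D : Fin N → ∀ i, Fin (s i)} (hD : hasStrength s D (R - 1))
    (C : ∀ i, Fin (s i) → Fin (s i - 1) → ℝ) (hC : ∀ i, isNOC (C i))
    (T : Finset (Fin n)) (hT : T.card ≤ R - 1)
    (j' j'' : ∀ i : T, Fin (s i.1 - 1)) :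
    ∑ r, intCol C D T j' r * intCol C D T j'' r = if j' = j'' then (N : ℝ) else 0 := by
  classical
  set g : ∀ i, Fin (s i) → ℝ := fun i l =>
    C i l (Jext hs T j' i) * C i l (Jext hs T j'' i) with hg
  have h1 : ∀ r, intCol C D T j' r * intCol C D T j'' r = ∏ i ∈ T, g i (D r i) := by
    intro r
    rw [hg]
    simp only []
    rw [Finset.prod_mul_distrib, intCol_eq hs C D T j', intCol_eq hs C D T j'']
  simp_rw [h1]
  rw [master hR hn hs hD T hT g]
  by_cases h : j' = j''
  · subst h
    rw [if_pos rfl]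
    have h2 : ∏ i ∈ T, ∑ l, g i l = ∏ i ∈ T, (s i : ℝ) := by
      apply Finset.prod_congr rfl
      intro i hi
      rw [hg]
      simp only []
      rw [(hC i).2, if_pos rfl]
    rw [h2, div_mul_cancel₀ _ (prod_cast_ne_zero hs T)]
  · rw [if_neg h]
    have hx : ¬ ∀ i : T, j' i = j'' i := fun hcon => h (funext hcon)
    push_neg at hx
    obtain ⟨i, hi⟩ := hx
    have h0 : ∏ i ∈ T, ∑ l, g i l = 0 := by
      apply Finset.prod_eq_zero i.2
      rw [hg]
      simp only []
      rw [(hC i.1).2, if_neg]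
      rw [Jext_mem hs T j' i, Jext_mem hs T j'' i]
      exact hi
    rw [h0, mul_zero]

/-- glue a contrast index for `c` and a tuple on `U.erase c` into a tuple on `U` -/
def glue (U : Finset (Fin n)) (c : Fin n) (jc : Fin (s c - 1))
    (j' : ∀ i : (U.erase c), Fin (s i.1 - 1)) (i : U) : Fin (s i.1 - 1) :=
  if h : i.1 ∈ U.erase c then j' ⟨i.1, h⟩
  else
    Fin.cast (by
      have hic : i.1 = c := by
        by_contra hne
        exact h (Finset.mem_erase.mpr ⟨hne, i.2⟩)
      rw [hic]) jc

lemma glue_c (U : Finset (Fin n)) (c : Fin n) (jc : Fin (s c - 1))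
    (j' : ∀ i : (U.erase c), Fin (s i.1 - 1)) (h : c ∈ U) :
    glue U c jc j' ⟨c, h⟩ = jc := by
  rw [glue, dif_neg (by simp : ¬ (c ∈ U.erase c))]
  exact Fin.ext rfl

lemma glue_mem (U : Finset (Fin n)) (c : Fin n) (jc : Fin (s c - 1))
    (j' : ∀ i : (U.erase c), Fin (s i.1 - 1)) (i : U) (h : i.1 ∈ U.erase c) :
    glue U c jc j' i = j' ⟨i.1, h⟩ := by
  rw [glue, dif_pos h]

def glueEquiv (U : Finset (Fin n)) (c : Fin n) (hc : c ∈ U) :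
    (Fin (s c - 1) × ∀ i : (U.erase c), Fin (s i.1 - 1)) ≃ (∀ i : U, Fin (s i.1 - 1)) where
  toFun p := glue U c p.1 p.2
  invFun jU := (jU ⟨c, hc⟩, fun i => jU ⟨i.1, Finset.mem_of_mem_erase i.2⟩)
  left_inv p := by
    obtain ⟨jc, j'⟩ := p
    dsimp only
    refine Prod.ext (glue_c U c jc j' hc) (funext fun i => ?_)
    exact glue_mem U c jc j' ⟨i.1, Finset.mem_of_mem_erase i.2⟩ i.2
  right_inv jU := by
    funext i
    dsimp only
    by_cases h : i.1 ∈ U.erase c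
    · rw [glue_mem _ _ _ _ _ h]
    · have hic : i.1 = c := by
        by_contra hne
        exact h (Finset.mem_erase.mpr ⟨hne, i.2⟩)
      obtain ⟨iv, hiv⟩ := i
      dsimp only at hic
      subst hic
      simp only [glue, dif_neg h]
      exact Fin.ext rfl

lemma sum_glue (U : Finset (Fin n)) (c : Fin n) (hc : c ∈ U)
    (F : (∀ i : U, Fin (s i.1 - 1)) → ℝ) :
    ∑ jU : ∀ i : U, Fin (s i.1 - 1), F jU =
      ∑ jc : Fin (s c - 1), ∑ j' : ∀ i : (U.erase c), Fin (s i.1 - 1),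
        F (glue U c jc j') := by
  rw [← Equiv.sum_comp (glueEquiv U c hc) F, Fintype.sum_prod_type]
  rfl

lemma intCol_glue (hs : ∀ i, 2 ≤ s i) (C : ∀ i, Fin (s i) → Fin (s i - 1) → ℝ)
    (D : Fin N → ∀ i, Fin (s i)) (U : Finset (Fin n)) (c : Fin n) (hc : c ∈ U)
    (jc : Fin (s c - 1)) (j' : ∀ i : (U.erase c), Fin (s i.1 - 1)) (r : Fin N) :
    intCol C D U (glue U c jc j') r = C c (D r c) jc * intCol C D (U.erase c) j' r := by
  rw [intCol_eq hs C D U, intCol_eq hs C D (U.erase c),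
    ← Finset.mul_prod_erase U (fun i => C i (D r i) (Jext hs U (glue U c jc j') i)) hc]
  congr 1
  · rw [show Jext hs U (glue U c jc j') c = glue U c jc j' ⟨c, hc⟩ from by
      rw [Jext, dif_pos hc], glue_c]
  · apply Finset.prod_congr rfl
    intro i hi
    congr 1
    rw [show Jext hs U (glue U c jc j') i = glue U c jc j' ⟨i, Finset.mem_of_mem_erase hi⟩
      from by rw [Jext, dif_pos (Finset.mem_of_mem_erase hi)],
      glue_mem _ _ _ _ _ hi, Jext, dif_pos hi]

lemma dot_span_zero (w : Fin N → ℝ) (G : Set (Fin N → ℝ))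
    (hG : ∀ v ∈ G, ∑ r, v r * w r = 0) :
    ∀ v ∈ Submodule.span ℝ G, ∑ r, v r * w r = 0 := by
  intro v hv
  induction hv using Submodule.span_induction with
  | mem x hx => exact hG x hx
  | zero => simp
  | add x y hx hy ihx ihy =>
      simp only [Pi.add_apply, add_mul, Finset.sum_add_distrib, ihx, ihy, add_zero]
  | smul a x hx ih =>
      simp only [Pi.smul_apply, smul_eq_mul, mul_assoc, ← Finset.mul_sum, ih, mul_zero]

/-- squared norm of the residual of the `j`-th main-effects column of `c`
after projecting onto the top interaction columns of `E`. -/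
lemma rho_norm (hN : 1 ≤ N) (hR : 2 ≤ R) (hn : R ≤ n) (hs : ∀ i, 2 ≤ s i)
    {D : Fin N → ∀ i, Fin (s i)} (hD : hasStrength s D (R - 1))
    (C : ∀ i, Fin (s i) → Fin (s i - 1) → ℝ) (hC : ∀ i, isNOC (C i))
    (c : Fin n) (E : Finset (Fin n)) (hEcard : E.card = R - 1) (j : Fin (s c - 1)) :
    ∑ r, (C c (D r c) j - ∑ j' : ∀ i : E, Fin (s i.1 - 1),
        ((∑ r', C c (D r' c) j * intCol C D E j' r') / N) * intCol C D E j' r) ^ 2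
      = N - (∑ j' : ∀ i : E, Fin (s i.1 - 1),
          (∑ r', C c (D r' c) j * intCol C D E j' r') ^ 2) / N := by
  classical
  have hNne : (N : ℝ) ≠ 0 := Nat.cast_ne_zero.mpr (by omega)
  set B : (∀ i : E, Fin (s i.1 - 1)) → ℝ :=
    fun j' => ∑ r', C c (D r' c) j * intCol C D E j' r' with hB
  have e1 : ∑ r, C c (D r c) j * C c (D r c) j = (N : ℝ) := by
    rw [dotXcXc hR hn hs hD C hC c j j, if_pos rfl]
  have e3 : ∀ j' j'' : ∀ i : E, Fin (s i.1 - 1),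
      ∑ r, intCol C D E j' r * intCol C D E j'' r = if j' = j'' then (N : ℝ) else 0 :=
    dotTT hR hn hs hD C hC E (le_of_eq hEcard) 
  have expand : ∀ r : Fin N,
      (C c (D r c) j - ∑ j', (B j' / N) * intCol C D E j' r) ^ 2
        = C c (D r c) j * C c (D r c) j
          - 2 * (C c (D r c) j * ∑ j', (B j' / N) * intCol C D E j' r)
          + (∑ j', (B j' / N) * intCol C D E j' r) *
            (∑ j', (B j' / N) * intCol C D E j' r) := fun r => by ring
  rw [Finset.sum_congr rfl (fun r _ => expand r), Finset.sum_add_distrib,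
    Finset.sum_sub_distrib, e1]
  have eab : ∑ r, 2 * (C c (D r c) j * ∑ j', (B j' / N) * intCol C D E j' r)
      = 2 * ((∑ j', (B j') ^ 2) / N) := by
    rw [← Finset.mul_sum]
    congr 1
    have step : ∀ r, C c (D r c) j * ∑ j', (B j' / N) * intCol C D E j' r
        = ∑ j', (B j' / N) * (C c (D r c) j * intCol C D E j' r) := by
      intro r
      rw [Finset.mul_sum]
      exact Finset.sum_congr rfl fun j' _ => by ring
    rw [Finset.sum_congr rfl fun r _ => step r, Finset.sum_comm]
    have step2 : ∀ j', ∑ r, (B j' / N) * (C c (D r c) j * intCol C D E j' r)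
        = (B j') ^ 2 / N := by
      intro j'
      rw [← Finset.mul_sum]
      show (B j' / N) * B j' = (B j') ^ 2 / N
      rw [sq]
      ring
    rw [Finset.sum_congr rfl fun j' _ => step2 j', ← Finset.sum_div]
  have ebb : ∑ r, (∑ j', (B j' / N) * intCol C D E j' r) *
      (∑ j', (B j' / N) * intCol C D E j' r) = (∑ j', (B j') ^ 2) / N := by
    have h1 : ∀ r : Fin N, (∑ j', (B j' / N) * intCol C D E j' r) *
        (∑ j'', (B j'' / N) * intCol C D E j'' r)
        = ∑ j', ∑ j'', ((B j' / N) * (B j'' / N)) *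
            (intCol C D E j' r * intCol C D E j'' r) := by
      intro r
      rw [Finset.sum_mul_sum]
      exact Finset.sum_congr rfl fun j' _ => Finset.sum_congr rfl fun j'' _ => by ring
    rw [Finset.sum_congr rfl fun r _ => h1 r, Finset.sum_comm]
    rw [Finset.sum_congr rfl fun j' _ => Finset.sum_comm]
    have h3 : ∀ j' j'' : ∀ i : E, Fin (s i.1 - 1),
        ∑ r, ((B j' / N) * (B j'' / N)) * (intCol C D E j' r * intCol C D E j'' r)
          = ((B j' / N) * (B j'' / N)) * (if j' = j'' then (N : ℝ) else 0) := by
      intro j' j''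
      rw [← Finset.mul_sum, e3]
    rw [Finset.sum_congr rfl fun j' _ =>
      Finset.sum_congr rfl fun j'' _ => h3 j' j'']
    have h4 : ∀ j' : ∀ i : E, Fin (s i.1 - 1),
        ∑ j'', ((B j' / N) * (B j'' / N)) * (if j' = j'' then (N : ℝ) else 0)
          = (B j') ^ 2 / N := by
      intro j'
      rw [Finset.sum_eq_single j']
      · rw [if_pos rfl]
        field_simp
      · intro j'' _ hne
        rw [if_neg (fun h => hne h.symm), mul_zero]
      · intro h
        exact absurd (Finset.mem_univ j') h
    rw [Finset.sum_congr rfl fun j' _ => h4 j', ← Finset.sum_div]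
  rw [eab, ebb]
  ring

end AuxiliaryLemmas

/-- factor `c ∈ U` is completely confounded by the factors in `U \ {c}`
if and only if `a_R(U) = s c - 1`. -/
theorem statement1 {N n R : ℕ} (hN : 1 ≤ N) (hR : 2 ≤ R) (hn : R ≤ n)
    {s : Fin n → ℕ} (hs : ∀ i, 2 ≤ s i)
    (D : Fin N → ∀ i, Fin (s i)) (hD : hasStrength s D (R - 1))
    (C : ∀ i, Fin (s i) → Fin (s i - 1) → ℝ) (hC : ∀ i, isNOC (C i))
    (U : Finset (Fin n)) (hU : U.card = R) (c : Fin n) (hc : c ∈ U) :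
    confounded C D c (U.erase c) ↔ projFreq C D U = (s c : ℝ) - 1 := by
  classical
  have hEcard : (U.erase c).card = R - 1 := by rw [Finset.card_erase_of_mem hc, hU]
  have hNne : (N : ℝ) ≠ 0 := Nat.cast_ne_zero.mpr (by omega)
  have hEne : (U.erase c).Nonempty := Finset.card_pos.mp (by omega)
  set B : Fin (s c - 1) → (∀ i : (U.erase c : Finset (Fin n)), Fin (s i.1 - 1)) → ℝ :=
    fun j j' => ∑ r, C c (D r c) j * intCol C D (U.erase c) j' r with hBdef
  -- projection frequency in terms of B
  have hPF : projFreq C D U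
      = (∑ j : Fin (s c - 1),
          ∑ j' : ∀ i : (U.erase c : Finset (Fin n)), Fin (s i.1 - 1), (B j j') ^ 2)
        / (N : ℝ) ^ 2 := by
    rw [projFreq]
    congr 1
    rw [sum_glue U c hc (fun jU => (∑ r, intCol C D U jU r) ^ 2)]
    apply Finset.sum_congr rfl; intro jc _
    apply Finset.sum_congr rfl; intro j' _
    congr 1
    exact Finset.sum_congr rfl fun r _ => intCol_glue hs C D U c hc jc j' r
  -- residual norms
  have hrho : ∀ j : Fin (s c - 1),
      ∑ r, (C c (D r c) j -
          ∑ j', (B j j' / N) * intCol C D (U.erase c) j' r) ^ 2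
        = (N : ℝ) - (∑ j', (B j j') ^ 2) / N :=
    fun j => rho_norm hN hR hn hs hD C hC c (U.erase c) hEcard j
  -- linear combinations of top interaction columns lie in the span
  have hPmem : ∀ k : (∀ i : (U.erase c : Finset (Fin n)), Fin (s i.1 - 1)) → ℝ,
      (fun r => ∑ j', k j' * intCol C D (U.erase c) j' r)
        ∈ Submodule.span ℝ (fullCols C D (U.erase c)) := by
    intro k
    have hfun : (fun r => ∑ j', k j' * intCol C D (U.erase c) j' r)
        = ∑ j', k j' • (fun r => intCol C D (U.erase c) j' r) := by
      funext r
      rw [Finset.sum_apply]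
      exact Finset.sum_congr rfl fun j' _ => rfl
    rw [hfun]
    exact Submodule.sum_mem _ fun j' _ => Submodule.smul_mem _ _
      (Submodule.subset_span (Or.inr ⟨U.erase c, Finset.Subset.refl _, hEne, j', rfl⟩))
  -- cast fact
  have hsc1 : ((s c - 1 : ℕ) : ℝ) = (s c : ℝ) - 1 := by
    have h1 : 1 ≤ s c := by have := hs c; omega
    push_cast [Nat.cast_sub h1]
    ring
  constructor
  · -- confounded → projFreq = s c - 1
    intro hconf
    have hkey : ∀ j : Fin (s c - 1), (∑ j', (B j j') ^ 2) = (N : ℝ) ^ 2 := by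
      intro j
      set ρ : Fin N → ℝ :=
        fun r => C c (D r c) j - ∑ j', (B j j' / N) * intCol C D (U.erase c) j' r with hρ
      have hρspan : ρ ∈ Submodule.span ℝ (fullCols C D (U.erase c)) := by
        have h1 : ρ = (fun r => C c (D r c) j) -
            (fun r => ∑ j', (B j j' / N) * intCol C D (U.erase c) j' r) := rfl
        rw [h1]
        exact Submodule.sub_mem _ (hconf j) (hPmem _)
      have hortho : ∀ v ∈ fullCols C D (U.erase c), ∑ r, v r * ρ r = 0 := by
        rintro v (hv | ⟨S, hSsub, hSne, j'', rfl⟩)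
        · -- the all-ones column
          rw [Set.mem_singleton_iff.mp hv]
          simp only [one_mul, hρ]
          rw [Finset.sum_sub_distrib, dotXc_one hR hn hs hD C hC c j]
          rw [Finset.sum_comm]
          have h2 : ∀ j', ∑ r, (B j j' / N) * intCol C D (U.erase c) j' r = 0 := by
            intro j'
            rw [← Finset.mul_sum,
              colsum_zero hR hn hs hD C hC (U.erase c) hEne (le_of_eq hEcard) j', mul_zero]
          rw [Finset.sum_congr rfl fun j' _ => h2 j', Finset.sum_const_zero]
          ring
        · -- an interaction column of S ⊆ U.erase c
          simp only [hρ]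
          have hexp : ∀ r, intCol C D S j'' r *
              (C c (D r c) j - ∑ j', (B j j' / N) * intCol C D (U.erase c) j' r)
              = C c (D r c) j * intCol C D S j'' r
                - ∑ j', (B j j' / N) *
                    (intCol C D (U.erase c) j' r * intCol C D S j'' r) := by
            intro r
            rw [mul_sub, Finset.mul_sum]
            congr 1
            · ring
            · exact Finset.sum_congr rfl fun j' _ => by ring
          rw [Finset.sum_congr rfl fun r _ => hexp r, Finset.sum_sub_distrib,
            Finset.sum_comm]
          have h3 : ∀ j', ∑ r, (B j j' / N) *
              (intCol C D (U.erase c) j' r * intCol C D S j'' r)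
              = (B j j' / N) * ∑ r, intCol C D (U.erase c) j' r * intCol C D S j'' r := by
            intro j'; rw [Finset.mul_sum]
          rw [Finset.sum_congr rfl fun j' _ => h3 j']
          by_cases hSE : S = U.erase c
          · subst hSE
            have h4 : ∀ j' : ∀ i : (U.erase c : Finset (Fin n)), Fin (s i.1 - 1),
                (B j j' / N) *
                  ∑ r, intCol C D (U.erase c) j' r * intCol C D (U.erase c) j'' r
                = if j' = j'' then B j j' else 0 := by
              intro j'
              rw [dotTT hR hn hs hD C hC (U.erase c) (le_of_eq hEcard) j' j'']
              by_cases h : j' = j''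
              · rw [if_pos h, if_pos h, div_mul_cancel₀ _ hNne]
              · rw [if_neg h, if_neg h, mul_zero]
            rw [Finset.sum_congr rfl fun j' _ => h4 j',
              Finset.sum_ite_eq' Finset.univ j'' (fun j' => B j j'),
              if_pos (Finset.mem_univ _)]
            exact sub_eq_zero_of_eq rfl
          · have hcS : c ∉ S := fun h => (Finset.notMem_erase c U) (hSsub h)
            have hcard : S.card + 1 ≤ R - 1 := by
              have := Finset.card_lt_card (HasSubset.Subset.ssubset_of_ne hSsub hSE)
              omega
            rw [dotXcS hR hn hs hD C hC c j S hcS hcard j'']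
            have h5 : ∀ j', ∑ r, intCol C D (U.erase c) j' r * intCol C D S j'' r = 0 :=
              fun j' => dotTS hR hn hs hD C hC (U.erase c) (le_of_eq hEcard) S hSsub hSE j' j''
            rw [Finset.sum_congr rfl fun j' _ => by rw [h5 j', mul_zero]]
            rw [Finset.sum_const_zero]
            ring
      have hzero : ∑ r, ρ r * ρ r = 0 := dot_span_zero ρ _ hortho ρ hρspan
      have hz2 : (N : ℝ) - (∑ j', (B j j') ^ 2) / N = 0 := by
        rw [← hrho j, ← hzero]
        exact Finset.sum_congr rfl fun r _ => by rw [sq]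
      have : (∑ j', (B j j') ^ 2) = N * N := by
        field_simp at hz2
        linarith
      rw [this]; ring
    rw [hPF, Finset.sum_congr rfl fun j _ => hkey j, Finset.sum_const,
      Finset.card_univ, Fintype.card_fin, nsmul_eq_mul, hsc1,
      mul_div_assoc, div_self (pow_ne_zero 2 hNne), mul_one]
  · -- projFreq = s c - 1 → confounded
    intro hpf
    have h1 : ∑ j : Fin (s c - 1), ∑ j', (B j j') ^ 2 = ((s c : ℝ) - 1) * (N : ℝ) ^ 2 := by
      rw [hPF] at hpf
      field_simp at hpf
      linarith
    have hsum : ∑ j : Fin (s c - 1), ((N : ℝ) - (∑ j', (B j j') ^ 2) / N) = 0 := by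
      rw [Finset.sum_sub_distrib, Finset.sum_const, Finset.card_univ, Fintype.card_fin,
        nsmul_eq_mul, hsc1, ← Finset.sum_div, h1]
      field_simp
      ring
    have hnonneg : ∀ j ∈ (Finset.univ : Finset (Fin (s c - 1))),
        0 ≤ (N : ℝ) - (∑ j', (B j j') ^ 2) / N := by
      intro j _
      rw [← hrho j]
      exact Finset.sum_nonneg fun r _ => sq_nonneg _
    have hzero := (Finset.sum_eq_zero_iff_of_nonneg hnonneg).mp hsum
    intro j
    have h0 : ∑ r, (C c (D r c) j -
        ∑ j', (B j j' / N) * intCol C D (U.erase c) j' r) ^ 2 = 0 := by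
      rw [hrho j]
      exact hzero j (Finset.mem_univ j)
    have hrzero : ∀ r, C c (D r c) j
        = ∑ j', (B j j' / N) * intCol C D (U.erase c) j' r := by
      intro r
      have := (Finset.sum_eq_zero_iff_of_nonneg
        (fun r _ => sq_nonneg _)).mp h0 r (Finset.mem_univ r)
      have h2 := (pow_eq_zero_iff (by norm_num : (2:ℕ) ≠ 0)).mp this
      linarith [h2]
    have hfun : (fun r => C c (D r c) j)
        = fun r => ∑ j', (B j j' / N) * intCol C D (U.erase c) j' r :=
      funext hrzero
    rw [hfun]
    exact hPmem _
end

section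
/- Let D be a design of strength R−1 (R ≥ 2) with n ≥ R factors, each factor given a normalized orthogonal coding. Let U be an R-element set of factors and s_min = min_{i∈U} s i. Then a_R(U) ≤ s_min − 1. -/
open Finset Matrix

/-!
Orthogonality of the codings, extended by the all-ones column, turns the numerator of `a_R(U)`
into `∑_{r,r'} ∏_{i ∈ U} (s_i [D r i = D r' i] - 1)`. Expanding the product over subsets
`T ⊆ U`, every proper `T` has at most `R - 1` factors, so by strength `R - 1` its weighted
coincidence count `K(T) = ∑_{r,r'} ∏_{i ∈ T} s_i [D r i = D r' i]` equals `N²`, and the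
alternating sum collapses to `K(U) - N²`. Forgetting the coincidence condition at a factor `i₀`
with `s i₀ = s_min` and applying strength to the other `R - 1` factors gives `K(U) ≤ s_min N²`.
-/

theorem Finset.sum_powerset_neg_one_pow_card_sdiff_mul {ι R : Type*} [DecidableEq ι] [CommRing R]
    {U : Finset ι} (hU : U.Nonempty) {S : Finset ι → R} {c : R} (hS : ∀ T ⊂ U, S T = c) :
    ∑ T ∈ U.powerset, (-1) ^ #(U \ T) * S T = S U - c := by
  have hsigns : ∑ T ∈ U.powerset, (-1 : R) ^ #(U \ T) = 0 := by
    obtain ⟨i, hi⟩ := hU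
    simpa [prod_const] using (prod_add (fun _ => (1 : R)) (fun _ => -1) U).symm.trans
      (prod_eq_zero hi (add_neg_cancel 1))
  calc ∑ T ∈ U.powerset, (-1) ^ #(U \ T) * S T
      = ∑ T ∈ U.powerset, (-1) ^ #(U \ T) * (S T - c) +
          (∑ T ∈ U.powerset, (-1) ^ #(U \ T)) * c := by
        simp only [mul_sub, sum_sub_distrib, sum_mul]; ring
    _ = S U - c := by
        rw [hsigns, zero_mul, add_zero, sum_eq_single_of_mem U (mem_powerset_self U)]
        · simp
        · intro T hT hTU
          rw [hS T (ssubset_of_subset_of_ne (mem_powerset.mp hT) hTU), sub_self, mul_zero]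

namespace isNOC

theorem sum_mul_row_eq {m : ℕ} {C : Fin m → Fin (m - 1) → ℝ} (hC : isNOC C) (a b : Fin m) :
    ∑ j, C a j * C b j = (if a = b then (m : ℝ) else 0) - 1 := by
  -- Appending the all-ones column gives a square `M` with `Mᵀ M = m • 1`, hence `M Mᵀ = m • 1`.
  have hm : (m : ℝ) ≠ 0 := Nat.cast_ne_zero.mpr a.pos.ne'
  let M : Matrix (Fin m) (Fin (m - 1) ⊕ Unit) ℝ := of fun l => Sum.elim (C l) fun _ => 1
  have hMtM : Mᵀ * M = (m : ℝ) • 1 := by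
    ext (j | _) (j' | _) <;>
      simp [M, mul_apply, one_apply, hC.1, hC.2, mul_comm]
  have e : Fin (m - 1) ⊕ Unit ≃ Fin m := Fintype.equivOfCardEq <| by
    simp [Nat.sub_add_cancel a.pos]
  have hMMt : M * Mᵀ = (m : ℝ) • 1 := by
    have hinv : ((m : ℝ)⁻¹ • Mᵀ) * M = 1 := by
      rw [smul_mul, hMtM, smul_smul, inv_mul_cancel₀ hm, one_smul]
    rw [← inv_smul_eq_iff₀ hm, ← Matrix.mul_smul]
    exact (mul_eq_one_comm_of_equiv e).mp hinv
  have hab := congrFun (congrFun hMMt a) b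
  simp only [M, mul_apply, of_apply, transpose_apply, Fintype.sum_sum_type, Sum.elim_inl,
    Sum.elim_inr, univ_unique, mul_one, sum_const, card_singleton, one_smul, Matrix.smul_apply,
    one_apply, smul_eq_mul, mul_ite, mul_zero] at hab
  linarith

end isNOC

namespace hasStrength

variable {N n t : ℕ} {s : Fin n → ℕ} {D : Fin N → ∀ i, Fin (s i)}

theorem card_filter_of_subset (hD : hasStrength s D t) {T T' : Finset (Fin n)} (hTT' : T ⊆ T')
    (hT' : #T' = t) (x : ∀ i, Fin (s i)) :
    #{r | ∀ i ∈ T, D r i = x i} = (∏ i ∈ T' \ T, s i) * (N / ∏ i ∈ T', s i) := by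
  -- Fibre by the levels on `T' \ T`: each fibre is a level combination of the projection on `T'`.
  have hfibre : ∀ q : (∀ i : ↥(T' \ T), Fin (s i)),
      #{r ∈ ({r | ∀ i ∈ T, D r i = x i} : Finset (Fin N)) | (fun i : ↥(T' \ T) => D r i) = q} =
        N / ∏ i ∈ T', s i := by
    intro q
    rw [← hD T' hT' fun i => if h : i ∈ T' \ T then q ⟨i, h⟩ else x i, filter_filter]
    congr 1
    ext r
    simp only [mem_filter, mem_univ, true_and, funext_iff, Subtype.forall, mem_sdiff]
    constructor
    · rintro ⟨hT, hq⟩ i hi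
      by_cases hiT : i ∈ T
      · simp [hiT, hT i hiT]
      · simp [hi, hiT, hq i ⟨hi, hiT⟩]
    · intro h
      refine ⟨fun i hi => by simpa [hi] using h i (hTT' hi), fun i hi => ?_⟩
      simpa [hi] using h i hi.1
  rw [card_eq_sum_card_fiberwise (f := fun r (i : ↥(T' \ T)) => D r i) (t := univ)
    fun _ _ => mem_univ _]
  simp only [hfibre, sum_const, card_univ, Fintype.card_pi, Fintype.card_fin, prod_coe_sort,
    smul_eq_mul]

theorem prod_mul_card_filter (hD : hasStrength s D t) (ht : t ≤ n) {T : Finset (Fin n)}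
    (hT : #T ≤ t) (x : ∀ i, Fin (s i)) :
    (∏ i ∈ T, s i) * #{r | ∀ i ∈ T, D r i = x i} = N := by
  obtain ⟨T', hTT', -, hT'⟩ := exists_subsuperset_card_eq (subset_univ T) hT (by simpa using ht)
  have hN : N = (∏ i ∈ T', s i) * (N / ∏ i ∈ T', s i) := by
    simpa using hD.card_filter_of_subset (empty_subset T') hT' x
  rw [hD.card_filter_of_subset hTT' hT' x, ← mul_assoc, mul_comm (∏ i ∈ T, s i),
    prod_sdiff hTT', ← hN]

theorem prod_mul_card_filter_le (hD : hasStrength s D t) (ht : t ≤ n) {W U : Finset (Fin n)}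
    (hWU : W ⊆ U) (hW : #W ≤ t) (x : ∀ i, Fin (s i)) :
    (∏ i ∈ U, s i) * #{r | ∀ i ∈ U, D r i = x i} ≤ (∏ i ∈ U \ W, s i) * N := by
  calc (∏ i ∈ U, s i) * #{r | ∀ i ∈ U, D r i = x i}
      = (∏ i ∈ U \ W, s i) * ((∏ i ∈ W, s i) * #{r | ∀ i ∈ U, D r i = x i}) := by
        rw [← prod_sdiff hWU, mul_assoc]
    _ ≤ (∏ i ∈ U \ W, s i) * ((∏ i ∈ W, s i) * #{r | ∀ i ∈ W, D r i = x i}) := by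
        gcongr
    _ = (∏ i ∈ U \ W, s i) * N := by rw [hD.prod_mul_card_filter ht hW x]

end hasStrength

noncomputable def agreementSum {N n : ℕ} (s : Fin n → ℕ) (D : Fin N → ∀ i, Fin (s i))
    (T : Finset (Fin n)) : ℝ :=
  ∑ r, ∑ r', ∏ i ∈ T, if D r' i = D r i then (s i : ℝ) else 0

section agreementSum

variable {N n t : ℕ} {s : Fin n → ℕ} {D : Fin N → ∀ i, Fin (s i)}

theorem sum_prod_ite_eq_prod_mul_card (T : Finset (Fin n)) (x : ∀ i, Fin (s i)) :
    ∑ r, ∏ i ∈ T, (if D r i = x i then (s i : ℝ) else 0) =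
      ((∏ i ∈ T, s i) * #{r | ∀ i ∈ T, D r i = x i} : ℕ) := by
  rw [Nat.cast_mul, natCast_card_filter, mul_sum]
  refine sum_congr rfl fun r _ => ?_
  rw [prod_ite_zero]
  split_ifs <;> simp

theorem hasStrength.agreementSum_eq (hD : hasStrength s D t) (ht : t ≤ n) {T : Finset (Fin n)}
    (hT : #T ≤ t) : agreementSum s D T = (N : ℝ) ^ 2 := by
  simp [agreementSum, sum_prod_ite_eq_prod_mul_card, hD.prod_mul_card_filter ht hT, sq]

theorem hasStrength.agreementSum_le (hD : hasStrength s D t) (ht : t ≤ n) {W U : Finset (Fin n)}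
    (hWU : W ⊆ U) (hW : #W ≤ t) :
    agreementSum s D U ≤ (∏ i ∈ U \ W, (s i : ℝ)) * (N : ℝ) ^ 2 := by
  calc agreementSum s D U ≤ ∑ _r : Fin N, (((∏ i ∈ U \ W, s i) * N : ℕ) : ℝ) := by
        refine sum_le_sum fun r _ => ?_
        rw [sum_prod_ite_eq_prod_mul_card]
        exact_mod_cast hD.prod_mul_card_filter_le ht hWU hW (D r)
    _ = (∏ i ∈ U \ W, (s i : ℝ)) * (N : ℝ) ^ 2 := by
        simp only [Nat.cast_mul, Nat.cast_prod, sum_const, card_univ, Fintype.card_fin,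
          nsmul_eq_mul]
        ring

end agreementSum

theorem sum_sq_sum_intCol {N n : ℕ} {s : Fin n → ℕ} {C : ∀ i, Fin (s i) → Fin (s i - 1) → ℝ}
    (hC : ∀ i, isNOC (C i)) (D : Fin N → ∀ i, Fin (s i)) (U : Finset (Fin n)) :
    ∑ j, (∑ r, intCol C D U j r) ^ 2 = ∑ T ∈ U.powerset, (-1) ^ #(U \ T) * agreementSum s D T := by
  have hpair : ∀ r r', ∑ j, intCol C D U j r * intCol C D U j r' =
      ∏ i ∈ U, ((if D r' i = D r i then (s i : ℝ) else 0) + -1) := by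
    intro r r'
    simp only [intCol, ← prod_mul_distrib]
    rw [← Fintype.prod_sum fun (i : U) l => C i (D r i) l * C i (D r' i) l, ← prod_coe_sort U]
    refine prod_congr rfl fun i _ => ?_
    rw [(hC i).sum_mul_row_eq, sub_eq_add_neg]
    simp only [eq_comm (a := D r (i : Fin n))]
  calc ∑ j, (∑ r, intCol C D U j r) ^ 2
      = ∑ r, ∑ r', ∑ j, intCol C D U j r * intCol C D U j r' := by
        simp only [sq, sum_mul_sum]
        rw [sum_comm]
        exact sum_congr rfl fun r _ => sum_comm
    _ = ∑ r, ∑ r', ∑ T ∈ U.powerset,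
          (-1) ^ #(U \ T) * ∏ i ∈ T, (if D r' i = D r i then (s i : ℝ) else 0) := by
        simp only [hpair, prod_add, prod_const, mul_comm]
    _ = ∑ T ∈ U.powerset, (-1) ^ #(U \ T) * agreementSum s D T := by
        simp only [agreementSum, mul_sum]
        exact (sum_congr rfl fun r _ => sum_comm).trans sum_comm

theorem statement2_general {N n R : ℕ} (hN : 1 ≤ N) (hR : 2 ≤ R)
    {s : Fin n → ℕ}
    (D : Fin N → ∀ i, Fin (s i)) (hD : hasStrength s D (R - 1))
    (C : ∀ i, Fin (s i) → Fin (s i - 1) → ℝ) (hC : ∀ i, isNOC (C i))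
    (U : Finset (Fin n)) (hU : U.card = R) :
    projFreq C D U ≤ ((sInf (s '' (U : Set (Fin n))) : ℕ) : ℝ) - 1 := by
  have hUne : U.Nonempty := card_pos.mp (by omega)
  obtain ⟨i₀, hi₀, hsInf⟩ := Nat.sInf_mem ((coe_nonempty.mpr hUne).image s)
  have ht : R - 1 ≤ n := by
    have := card_le_univ U
    simp only [Fintype.card_fin, hU] at this
    omega
  have hproper : ∀ T ⊂ U, agreementSum s D T = (N : ℝ) ^ 2 := fun T hT =>
    hD.agreementSum_eq ht (by have := card_lt_card hT; omega)
  have hfull : agreementSum s D U ≤ s i₀ * (N : ℝ) ^ 2 := by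
    simpa [sdiff_erase_self hi₀] using
      hD.agreementSum_le ht (erase_subset i₀ U) (by rw [card_erase_of_mem hi₀, hU])
  rw [projFreq, sum_sq_sum_intCol hC, sum_powerset_neg_one_pow_card_sdiff_mul hUne hproper,
    ← hsInf, div_le_iff₀ (by positivity)]
  linarith

/-- `a_R(U) ≤ s_min - 1`, where `s_min = min_{i ∈ U} s i`. -/
theorem statement2 {N n R : ℕ} (hN : 1 ≤ N) (hR : 2 ≤ R) (hn : R ≤ n)
    {s : Fin n → ℕ} (hs : ∀ i, 2 ≤ s i)
    (D : Fin N → ∀ i, Fin (s i)) (hD : hasStrength s D (R - 1))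
    (C : ∀ i, Fin (s i) → Fin (s i - 1) → ℝ) (hC : ∀ i, isNOC (C i))
    (U : Finset (Fin n)) (hU : U.card = R) :
    projFreq C D U ≤ ((sInf (s '' (U : Set (Fin n))) : ℕ) : ℝ) - 1 :=
  statement2_general hN hR D hD C hC U hU
end

section
/- Let D be a design of strength R−1 (R ≥ 2) with n ≥ R factors, each factor given a normalized orthogonal coding. Let U be an R-element set of factors and s_min = min_{i∈U} s i. If i, j ∈ U are two factors with s i = s j = s_min, then factor i is completely confounded by the factors in U ∖ {i} if and only if factor j is completely confounded by the factors in U ∖ {j}. -/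
open Finset Matrix

/-!
Fix `i ∈ U` and put `E = U \ {i}`. Strength `|E|` makes the top-order interaction columns
`w_u` of `E` pairwise orthogonal of squared length `N`, and makes both them and the contrast
columns `x_j` of factor `i` orthogonal to every other column of `F_E` (the all-ones column and
the interactions of proper subsets of `E`). Hence `x_j ∈ span F_E` exactly when Bessel's
inequality `∑_u ⟨x_j, w_u⟩² ≤ N²` is an equality. The column sums of `X_U` are the numbers
`⟨x_j, w_u⟩`, so summing over `j` gives `N² a_R(U) ≤ N² (s_i - 1)`, with equality iff `i` is
completely confounded by `E`. This criterion depends on `i` only through `s_i`.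
-/
section Orthogonal

variable {ι τ : Type*} [Fintype ι] [Fintype τ] [DecidableEq τ]

theorem dotProduct_eq_zero_of_mem_span {A : Set (ι → ℝ)} {y v : ι → ℝ}
    (hA : ∀ a ∈ A, y ⬝ᵥ a = 0) (hv : v ∈ Submodule.span ℝ A) : y ⬝ᵥ v = 0 := by
  induction hv using Submodule.span_induction with
  | mem a ha => exact hA a ha
  | zero => exact dotProduct_zero y
  | add a b _ _ ha hb => rw [dotProduct_add, ha, hb, add_zero]
  | smul r a _ ha => rw [dotProduct_smul, ha, smul_zero]

variable {w : τ → ι → ℝ} {c : ℝ}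

theorem sub_sum_smul_dotProduct (hc : c ≠ 0)
    (hw : ∀ t t', w t ⬝ᵥ w t' = if t = t' then c else 0) (x : ι → ℝ) (t : τ) :
    (x - ∑ t', (x ⬝ᵥ w t' / c) • w t') ⬝ᵥ w t = 0 := by
  simp [sub_dotProduct, sum_dotProduct, smul_dotProduct, hw, hc]

theorem sub_sum_smul_dotProduct_self (hc : c ≠ 0)
    (hw : ∀ t t', w t ⬝ᵥ w t' = if t = t' then c else 0) (x : ι → ℝ) :
    (x - ∑ t, (x ⬝ᵥ w t / c) • w t) ⬝ᵥ (x - ∑ t, (x ⬝ᵥ w t / c) • w t) =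
      x ⬝ᵥ x - (∑ t, (x ⬝ᵥ w t) ^ 2) / c := by
  set p := ∑ t, (x ⬝ᵥ w t / c) • w t
  have hp : (x - p) ⬝ᵥ p = 0 := by
    simp only [p, dotProduct_sum, dotProduct_smul, sub_sum_smul_dotProduct hc hw, smul_zero,
      Finset.sum_const_zero]
  have hpx : p ⬝ᵥ x = (∑ t, (x ⬝ᵥ w t) ^ 2) / c := by
    simp only [p, sum_dotProduct, smul_dotProduct, Finset.sum_div, smul_eq_mul,
      dotProduct_comm (w _) x, div_mul_eq_mul_div, sq]
  rw [dotProduct_sub, hp, sub_zero, sub_dotProduct, hpx]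

theorem sum_sq_dotProduct_le (hc : 0 < c)
    (hw : ∀ t t', w t ⬝ᵥ w t' = if t = t' then c else 0) (x : ι → ℝ) :
    ∑ t, (x ⬝ᵥ w t) ^ 2 ≤ c * (x ⬝ᵥ x) := by
  have h0 : 0 ≤ x ⬝ᵥ x - (∑ t, (x ⬝ᵥ w t) ^ 2) / c :=
    sub_sum_smul_dotProduct_self hc.ne' hw x ▸ Finset.sum_nonneg fun i _ => mul_self_nonneg _
  rw [sub_nonneg, div_le_iff₀ hc] at h0
  linarith

theorem mem_span_iff_sum_sq_dotProduct_eq (hc : 0 < c)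
    (hw : ∀ t t', w t ⬝ᵥ w t' = if t = t' then c else 0) {A : Set (ι → ℝ)}
    (hwA : Set.range w ⊆ A) {x : ι → ℝ}
    (hA : ∀ a ∈ A, a ∈ Set.range w ∨ x ⬝ᵥ a = 0 ∧ ∀ t, w t ⬝ᵥ a = 0) :
    x ∈ Submodule.span ℝ A ↔ ∑ t, (x ⬝ᵥ w t) ^ 2 = c * (x ⬝ᵥ x) := by
  set p := ∑ t, (x ⬝ᵥ w t / c) • w t
  have hp : p ∈ Submodule.span ℝ A := Submodule.sum_mem _ fun t _ =>
    Submodule.smul_mem _ _ (Submodule.subset_span (hwA ⟨t, rfl⟩))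
  have hres : (x - p) ⬝ᵥ (x - p) = 0 ↔ ∑ t, (x ⬝ᵥ w t) ^ 2 = c * (x ⬝ᵥ x) := by
    rw [sub_sum_smul_dotProduct_self hc.ne' hw, sub_eq_zero, eq_div_iff hc.ne', eq_comm,
      mul_comm]
  rw [← hres]
  constructor
  · intro hx
    refine dotProduct_eq_zero_of_mem_span (fun a ha => ?_) (Submodule.sub_mem _ hx hp)
    rcases hA a ha with ⟨t, rfl⟩ | ⟨hxa, hwa⟩
    · exact sub_sum_smul_dotProduct hc.ne' hw x t
    · simp [p, sub_dotProduct, sum_dotProduct, smul_dotProduct, hxa, hwa]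
  · intro h
    rw [dotProduct_self_eq_zero, sub_eq_zero] at h
    exact h ▸ hp

end Orthogonal

theorem Finset.restrict_surjective {ι : Type*} {π : ι → Type*} (hπ : ∀ k, Nonempty (π k))
    (S : Finset ι) : Function.Surjective (S.restrict (π := π)) := by
  classical
  intro u
  exact ⟨fun k => if h : k ∈ S then u ⟨k, h⟩ else Classical.choice (hπ k),
    funext fun k => dif_pos k.2⟩

namespace hasStrength

variable {N n t : ℕ} {s : Fin n → ℕ} {D : Fin N → ∀ i, Fin (s i)}

theorem card_filter_restrict_eq (hs : ∀ i, 0 < s i) {T : Finset (Fin n)}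
    (hD : hasStrength s D T.card) (z : ∀ k : T, Fin (s k)) :
    #{r | T.restrict (D r) = z} = N / ∏ i ∈ T, s i := by
  obtain ⟨x, rfl⟩ := T.restrict_surjective (fun i => Fin.pos_iff_nonempty.mp (hs i)) z
  rw [← hD T rfl x]
  congr 1
  ext r
  simp [funext_iff]

theorem sum_comp_restrict (hs : ∀ i, 0 < s i) {T : Finset (Fin n)}
    (hD : hasStrength s D T.card) (f : (∀ k : T, Fin (s k)) → ℝ) :
    ∑ r, f (T.restrict (D r)) = (N / ∏ i ∈ T, s i : ℕ) * ∑ z, f z := by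
  rw [← Finset.sum_fiberwise Finset.univ (fun r => T.restrict (D r)), Finset.mul_sum]
  refine Finset.sum_congr rfl fun z _ => ?_
  rw [Finset.sum_congr rfl fun r hr => by rw [(Finset.mem_filter.mp hr).2], Finset.sum_const,
    hD.card_filter_restrict_eq hs, nsmul_eq_mul]

theorem sum_prod_mul_prod_eq_of_card (hs : ∀ i, 0 < s i) {T : Finset (Fin n)}
    (hD : hasStrength s D T.card) (h : ∀ k, Fin (s k) → ℝ) :
    (∑ r, ∏ k ∈ T, h k (D r k)) * ∏ k ∈ T, (s k : ℝ) = N * ∏ k ∈ T, ∑ l, h k l := by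
  have hN := hD.sum_comp_restrict hs fun _ => 1
  simp only [Finset.sum_const, Finset.card_univ, Fintype.card_pi, Fintype.card_fin,
    Finset.prod_coe_sort, nsmul_eq_mul, mul_one] at hN
  push_cast at hN
  have hL : ∀ r, ∏ k ∈ T, h k (D r k) = ∏ k : T, h k (T.restrict (D r) k) :=
    fun r => (Finset.prod_coe_sort T _).symm
  rw [Finset.sum_congr rfl fun r _ => hL r, hD.sum_comp_restrict hs fun z => ∏ k : T, h k (z k),
    ← Finset.prod_coe_sort T fun k => ∑ l, h k l, Fintype.prod_sum]
  linear_combination (∑ z : ∀ k : T, Fin (s k), ∏ k : T, h k (z k)) * hN.symm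

theorem sum_prod_mul_prod_eq (hs : ∀ i, 0 < s i) (hD : hasStrength s D t) (ht : t ≤ n)
    {T : Finset (Fin n)} (hT : T.card ≤ t) (h : ∀ k, Fin (s k) → ℝ) :
    (∑ r, ∏ k ∈ T, h k (D r k)) * ∏ k ∈ T, (s k : ℝ) = N * ∏ k ∈ T, ∑ l, h k l := by
  classical
  obtain ⟨T', hTT', -, rfl⟩ :=
    Finset.exists_subsuperset_card_eq (Finset.subset_univ T) hT (by simpa using ht)
  -- extend `h` by the constant `1` outside `T`, so that strength on `T'` applies
  have key := hD.sum_prod_mul_prod_eq_of_card hs fun k l => if k ∈ T then h k l else 1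
  have hfilter : T'.filter (· ∈ T) = T := by
    rw [Finset.filter_mem_eq_inter, Finset.inter_eq_right.mpr hTT']
  have hpos : ∏ k ∈ T'.filter (· ∉ T), (s k : ℝ) ≠ 0 :=
    Finset.prod_ne_zero_iff.mpr fun k _ => by exact_mod_cast (hs k).ne'
  have hsum : ∀ k, ∑ l, (if k ∈ T then h k l else 1) = if k ∈ T then ∑ l, h k l else (s k : ℝ) :=
    fun k => by split_ifs <;> simp
  simp only [hsum, Finset.prod_ite, hfilter, Finset.prod_const_one, mul_one] at key
  rw [← Finset.prod_filter_mul_prod_filter_not T' (· ∈ T), hfilter] at key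
  apply mul_right_cancel₀ hpos
  linear_combination key

end hasStrength

theorem isNOC.sum_ite_mul_ite {m : ℕ} {c : Fin m → Fin (m - 1) → ℝ} (hc : isNOC c)
    {p q : Prop} [Decidable p] [Decidable q] (hpq : p ∨ q) (a b : Fin (m - 1)) :
    ∑ l, (if p then c l a else 1) * (if q then c l b else 1) =
      if p ∧ q ∧ a = b then (m : ℝ) else 0 := by
  by_cases hp : p <;> by_cases hq : q <;> simp [hp, hq, hc.1, hc.2] at hpq ⊢

section Columns

variable {N n t : ℕ} {s : Fin n → ℕ} {C : ∀ i, Fin (s i) → Fin (s i - 1) → ℝ}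
  {D : Fin N → ∀ i, Fin (s i)} {E U : Finset (Fin n)} {i : Fin n}

variable (C D) in
/-- The column of `X_S` whose contrast indices are read off the tuple `J` on all factors, so that
columns of different interaction matrices are indexed uniformly; `S = ∅` gives the all-ones
column. -/
def prodCol (S : Finset (Fin n)) (J : ∀ k, Fin (s k - 1)) : Fin N → ℝ :=
  fun r => ∏ k ∈ S, C k (D r k) (J k)

theorem intCol_restrict (S : Finset (Fin n)) (J : ∀ k, Fin (s k - 1)) :
    intCol C D S (S.restrict J) = prodCol C D S J :=
  funext fun r => Finset.prod_coe_sort S fun k => C k (D r k) (J k)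

theorem prodCol_dotProduct_prodCol (hs : ∀ i, 0 < s i) (hC : ∀ i, isNOC (C i))
    (hD : hasStrength s D t) (ht : t ≤ n) {S S' : Finset (Fin n)} (hSS' : (S ∪ S').card ≤ t)
    (J J' : ∀ k, Fin (s k - 1)) :
    prodCol C D S J ⬝ᵥ prodCol C D S' J' =
      if S = S' ∧ ∀ k ∈ S, J k = J' k then (N : ℝ) else 0 := by
  classical
  have hprod : ∀ r, prodCol C D S J r * prodCol C D S' J' r =
      ∏ k ∈ S ∪ S', (if k ∈ S then C k (D r k) (J k) else 1) *
        (if k ∈ S' then C k (D r k) (J' k) else 1) := fun r => by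
    rw [Finset.prod_mul_distrib, Finset.prod_ite_mem, Finset.prod_ite_mem,
      Finset.union_inter_cancel_left, Finset.union_inter_cancel_right]
    rfl
  have hcond : (∀ k ∈ S ∪ S', k ∈ S ∧ k ∈ S' ∧ J k = J' k) ↔
      S = S' ∧ ∀ k ∈ S, J k = J' k := by
    constructor
    · intro h
      exact ⟨Finset.ext fun k => ⟨fun hk => (h k (Finset.mem_union_left _ hk)).2.1,
        fun hk => (h k (Finset.mem_union_right _ hk)).1⟩,
        fun k hk => (h k (Finset.mem_union_left _ hk)).2.2⟩
    · rintro ⟨rfl, hJ⟩ k hk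
      rw [Finset.union_self] at hk
      exact ⟨hk, hk, hJ k hk⟩
  have key := hD.sum_prod_mul_prod_eq hs ht hSS' fun k l =>
    (if k ∈ S then C k l (J k) else 1) * (if k ∈ S' then C k l (J' k) else 1)
  rw [Finset.prod_congr rfl fun k hk => (hC k).sum_ite_mul_ite (Finset.mem_union.mp hk) _ _,
    Finset.prod_ite_zero] at key
  simp only [hcond] at key
  have hpos : ∏ k ∈ S ∪ S', (s k : ℝ) ≠ 0 :=
    Finset.prod_ne_zero_iff.mpr fun k _ => by exact_mod_cast (hs k).ne'
  apply mul_right_cancel₀ hpos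
  simp only [dotProduct, hprod, key]
  split_ifs <;> ring

variable (C D) in
def mainEffectCol (i : Fin n) (j : Fin (s i - 1)) : Fin N → ℝ :=
  fun r => C i (D r i) j

theorem nonempty_contrast (hs : ∀ i, 2 ≤ s i) (k : Fin n) : Nonempty (Fin (s k - 1)) :=
  ⟨⟨0, by have := hs k; omega⟩⟩

theorem exists_prodCol_singleton_eq (hs : ∀ i, 2 ≤ s i) (i : Fin n) (j : Fin (s i - 1)) :
    ∃ J, prodCol C D {i} J = mainEffectCol C D i j := by
  exact ⟨Function.update (fun k => (nonempty_contrast hs k).some) i j,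
    funext fun r => by simp [prodCol, mainEffectCol]⟩

theorem mainEffectCol_dotProduct_self (hs : ∀ i, 2 ≤ s i) (hC : ∀ i, isNOC (C i))
    (hD : hasStrength s D t) (ht : 1 ≤ t) (htn : t ≤ n) (i : Fin n) (j : Fin (s i - 1)) :
    mainEffectCol C D i j ⬝ᵥ mainEffectCol C D i j = N := by
  obtain ⟨J, hJ⟩ := exists_prodCol_singleton_eq (C := C) (D := D) hs i j
  rw [← hJ, prodCol_dotProduct_prodCol (fun k => two_pos.trans_le (hs k)) hC hD htn
    (by simpa using ht)]
  simp

theorem intCol_dotProduct_intCol (hs : ∀ i, 2 ≤ s i) (hC : ∀ i, isNOC (C i))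
    (hD : hasStrength s D t) (htn : t ≤ n) (hE : E.card ≤ t)
    (u u' : ∀ k : E, Fin (s k - 1)) :
    intCol C D E u ⬝ᵥ intCol C D E u' = if u = u' then (N : ℝ) else 0 := by
  obtain ⟨J, rfl⟩ := E.restrict_surjective (nonempty_contrast hs) u
  obtain ⟨J', rfl⟩ := E.restrict_surjective (nonempty_contrast hs) u'
  rw [intCol_restrict, intCol_restrict, prodCol_dotProduct_prodCol
    (fun k => two_pos.trans_le (hs k)) hC hD htn (by rwa [Finset.union_self])]
  simp [funext_iff]

theorem mainEffectCol_dotProduct_prodCol_of_ssubset (hs : ∀ i, 2 ≤ s i)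
    (hC : ∀ i, isNOC (C i)) (hD : hasStrength s D E.card) (hiE : i ∉ E) {S : Finset (Fin n)}
    (hSE : S ⊂ E) (J : ∀ k, Fin (s k - 1)) (j : Fin (s i - 1)) :
    mainEffectCol C D i j ⬝ᵥ prodCol C D S J = 0 := by
  obtain ⟨J', hJ'⟩ := exists_prodCol_singleton_eq (C := C) (D := D) hs i j
  have hcard : ({i} ∪ S).card ≤ E.card :=
    (Finset.card_union_le _ _).trans (by simpa [Nat.one_add] using Finset.card_lt_card hSE)
  rw [← hJ', prodCol_dotProduct_prodCol (fun k => two_pos.trans_le (hs k)) hC hD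
    (card_finset_fin_le E) hcard, if_neg]
  rintro ⟨h, -⟩
  exact hiE (hSE.subset (h ▸ Finset.mem_singleton_self i))

theorem intCol_dotProduct_prodCol_of_ssubset (hs : ∀ i, 2 ≤ s i) (hC : ∀ i, isNOC (C i))
    (hD : hasStrength s D E.card) {S : Finset (Fin n)} (hSE : S ⊂ E)
    (J : ∀ k, Fin (s k - 1)) (u : ∀ k : E, Fin (s k - 1)) :
    intCol C D E u ⬝ᵥ prodCol C D S J = 0 := by
  obtain ⟨J', rfl⟩ := E.restrict_surjective (nonempty_contrast hs) u
  rw [intCol_restrict, prodCol_dotProduct_prodCol (fun k => two_pos.trans_le (hs k)) hC hD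
    (card_finset_fin_le E)
    (by rw [Finset.union_eq_left.mpr hSE.subset]), if_neg]
  rintro ⟨h, -⟩
  exact hSE.ne h.symm

theorem confounded_iff_forall_sum_sq_eq (hN : 0 < N) (hs : ∀ i, 2 ≤ s i)
    (hC : ∀ i, isNOC (C i)) (hD : hasStrength s D E.card) (hE : E.Nonempty) (hiE : i ∉ E) :
    confounded C D i E ↔
      ∀ j, ∑ u, (mainEffectCol C D i j ⬝ᵥ intCol C D E u) ^ 2 = (N : ℝ) ^ 2 := by
  have hw := intCol_dotProduct_intCol hs hC hD (card_finset_fin_le E) le_rfl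
  have hcols : ∀ a ∈ fullCols C D E, a ∈ Set.range (intCol C D E) ∨
      ∃ S ⊂ E, ∃ J, a = prodCol C D S J := by
    rintro a (rfl | ⟨S, hSE, -, u, rfl⟩)
    · exact Or.inr ⟨∅, hE.empty_ssubset, fun k => (nonempty_contrast hs k).some,
        funext fun r => by simp [prodCol]⟩
    · rcases hSE.eq_or_ssubset with rfl | hSE
      · exact Or.inl ⟨u, rfl⟩
      · obtain ⟨J, rfl⟩ := S.restrict_surjective (nonempty_contrast hs) u
        exact Or.inr ⟨S, hSE, J, intCol_restrict S J⟩
  unfold confounded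
  refine forall_congr' fun j => ?_
  change mainEffectCol C D i j ∈ _ ↔ _
  rw [mem_span_iff_sum_sq_dotProduct_eq (by exact_mod_cast hN) hw ?_ ?_,
    mainEffectCol_dotProduct_self hs hC hD hE.card_pos (card_finset_fin_le E), sq]
  · rintro _ ⟨u, rfl⟩
    exact Or.inr ⟨E, subset_rfl, hE, u, rfl⟩
  · intro a ha
    rcases hcols a ha with h | ⟨S, hSE, J, rfl⟩
    · exact Or.inl h
    · exact Or.inr ⟨mainEffectCol_dotProduct_prodCol_of_ssubset hs hC hD hiE hSE J j,
        intCol_dotProduct_prodCol_of_ssubset hs hC hD hSE J⟩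

theorem sum_sq_mainEffectCol_dotProduct_intCol_le (hN : 0 < N) (hs : ∀ i, 2 ≤ s i)
    (hC : ∀ i, isNOC (C i)) (hD : hasStrength s D E.card) (hE : E.Nonempty)
    (j : Fin (s i - 1)) :
    ∑ u, (mainEffectCol C D i j ⬝ᵥ intCol C D E u) ^ 2 ≤ (N : ℝ) ^ 2 := by
  have htn := card_finset_fin_le E
  have h := sum_sq_dotProduct_le (by exact_mod_cast hN)
    (intCol_dotProduct_intCol hs hC hD htn le_rfl) (mainEffectCol C D i j)
  rwa [mainEffectCol_dotProduct_self hs hC hD hE.card_pos htn, ← sq] at h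

theorem sum_sq_sum_intCol_eq (hs : ∀ i, 2 ≤ s i) (hi : i ∈ U) :
    ∑ v, (∑ r, intCol C D U v r) ^ 2 =
      ∑ j, ∑ u, (mainEffectCol C D i j ⬝ᵥ intCol C D (U.erase i) u) ^ 2 := by
  let φ (v : ∀ k : U, Fin (s k - 1)) : Fin (s i - 1) × ∀ k : U.erase i, Fin (s k - 1) :=
    (v ⟨i, hi⟩, Finset.restrict₂ (π := fun k => Fin (s k - 1)) (Finset.erase_subset i U) v)
  have hinj : φ.Injective := by
    intro v v' h
    funext k
    by_cases hk : k.1 = i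
    · obtain rfl : k = ⟨i, hi⟩ := Subtype.ext hk
      exact congrArg Prod.fst h
    · exact congrFun (congrArg Prod.snd h) ⟨k, Finset.mem_erase.mpr ⟨hk, k.2⟩⟩
  have hcard : Fintype.card (∀ k : U, Fin (s k - 1)) =
      Fintype.card (Fin (s i - 1) × ∀ k : U.erase i, Fin (s k - 1)) := by
    simp only [Fintype.card_pi, Fintype.card_prod, Fintype.card_fin,
      Finset.prod_coe_sort U fun k => s k - 1,
      Finset.prod_coe_sort (U.erase i) fun k => s k - 1]
    exact (Finset.mul_prod_erase U _ hi).symm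
  have hφ : φ.Bijective := (Fintype.bijective_iff_injective_and_card φ).mpr ⟨hinj, hcard⟩
  have hcol : ∀ v, ∑ r, intCol C D U v r =
      mainEffectCol C D i (φ v).1 ⬝ᵥ intCol C D (U.erase i) (φ v).2 := by
    intro v
    obtain ⟨J, rfl⟩ := U.restrict_surjective (nonempty_contrast hs) v
    change _ = mainEffectCol C D i (J i) ⬝ᵥ intCol C D (U.erase i) ((U.erase i).restrict J)
    simp only [intCol_restrict, dotProduct, prodCol, mainEffectCol]
    exact Finset.sum_congr rfl fun r _ => (Finset.mul_prod_erase U _ hi).symm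
  simp only [hcol]
  rw [hφ.sum_comp (fun p => (mainEffectCol C D i p.1 ⬝ᵥ intCol C D (U.erase i) p.2) ^ 2),
    Fintype.sum_prod_type]

theorem confounded_erase_iff_projFreq_eq (hN : 0 < N) (hs : ∀ i, 2 ≤ s i)
    (hC : ∀ i, isNOC (C i)) (hU : 2 ≤ U.card) (hD : hasStrength s D (U.card - 1))
    (hi : i ∈ U) :
    confounded C D i (U.erase i) ↔ projFreq C D U = s i - 1 := by
  have hcard : (U.erase i).card = U.card - 1 := Finset.card_erase_of_mem hi
  have hE : (U.erase i).Nonempty := Finset.card_pos.mp (by omega)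
  rw [← hcard] at hD
  have hconst : ∑ _j : Fin (s i - 1), (N : ℝ) ^ 2 = ((s i : ℝ) - 1) * N ^ 2 := by
    simp [Nat.cast_sub (one_le_two.trans (hs i))]
  rw [confounded_iff_forall_sum_sq_eq hN hs hC hD hE (Finset.notMem_erase i U), projFreq,
    sum_sq_sum_intCol_eq hs hi, div_eq_iff (by positivity), ← hconst,
    Finset.sum_eq_sum_iff_of_le fun j _ =>
      sum_sq_mainEffectCol_dotProduct_intCol_le hN hs hC hD hE j]
  simp

end Columns

theorem statement3_general {N n R : ℕ} (hN : 1 ≤ N) (hR : 2 ≤ R)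
    {s : Fin n → ℕ} (hs : ∀ i, 2 ≤ s i)
    (D : Fin N → ∀ i, Fin (s i)) (hD : hasStrength s D (R - 1))
    (C : ∀ i, Fin (s i) → Fin (s i - 1) → ℝ) (hC : ∀ i, isNOC (C i))
    (U : Finset (Fin n)) (hU : U.card = R) (i j : Fin n) (hi : i ∈ U) (hj : j ∈ U)
    (hsi : ∀ k ∈ U, s i ≤ s k) (hsj : ∀ k ∈ U, s j ≤ s k) :
    confounded C D i (U.erase i) ↔ confounded C D j (U.erase j) := by
  subst hU
  rw [confounded_erase_iff_projFreq_eq hN hs hC hR hD hi,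
    confounded_erase_iff_projFreq_eq hN hs hC hR hD hj, le_antisymm (hsi j hj) (hsj i hi)]

/-- if `i, j ∈ U` both attain the minimum number of levels `s_min` in `U`,
then `i` is completely confounded by `U \ {i}` iff `j` is completely confounded by
`U \ {j}`. -/
theorem statement3 {N n R : ℕ} (hN : 1 ≤ N) (hR : 2 ≤ R) (hn : R ≤ n)
    {s : Fin n → ℕ} (hs : ∀ i, 2 ≤ s i)
    (D : Fin N → ∀ i, Fin (s i)) (hD : hasStrength s D (R - 1))
    (C : ∀ i, Fin (s i) → Fin (s i - 1) → ℝ) (hC : ∀ i, isNOC (C i))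
    (U : Finset (Fin n)) (hU : U.card = R) (i j : Fin n) (hi : i ∈ U) (hj : j ∈ U)
    (hsi : ∀ k ∈ U, s i ≤ s k) (hsj : ∀ k ∈ U, s j ≤ s k) :
    confounded C D i (U.erase i) ↔ confounded C D j (U.erase j) :=
  statement3_general hN hR hs D hD C hC U hU i j hi hj hsi hsj
end

section
/- Let D be a design of strength R−1 (R ≥ 2) with n ≥ R factors, each factor given a normalized orthogonal coding. Let U be an R-element set of factors, s_min = min_{i∈U} s i, c ∈ U a factor with s c = s_min, and C = U ∖ {c}. Let X_C denote the (R−1)-factor interaction model matrix of the factors in C, with d columns. If a_R(U) = s_min − 1, then there exists an orthogonal d × d real matrix Q such that s_min − 1 of the columns of X_C · Q are exactly the s_min − 1 columns of the main-effects model matrix X_c. -/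
open Finset Matrix

/-!
Let `X` be the interaction model matrix of `U ∖ {c}` and `Y` the main-effects model matrix of
`c`. Strength `R - 1` makes the columns of each of them orthogonal of squared length `N`. The
matrix `X_U X_Uᵀ` is the entrywise product of `X Xᵀ` and `Y Yᵀ`, so `N² a_R(U) = ‖Xᵀ Y‖²`. As
`X Xᵀ / N` is the orthogonal projection onto the column space of `X`, `‖Xᵀ Y‖² ≤ N² (s_c - 1)`,
with equality exactly when every column of `Y` lies in that space, i.e. `X Xᵀ Y = N Y`. Then
`Xᵀ Y / N` has orthonormal columns; completing them to an orthogonal matrix `Q` puts the columns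
of `Y` among those of `X Q`.
-/

namespace Matrix

variable {ι J K R : Type*} [Fintype ι] [Fintype J] [Fintype K]

theorem sum_sq_sum_apply [CommSemiring R] (X : Matrix ι J R) :
    ∑ j, (∑ i, X i j) ^ 2 = ∑ i, ∑ i', (X * Xᵀ) i i' := by
  simp only [sq, sum_mul_sum, mul_apply, transpose_apply]
  rw [sum_comm]
  exact sum_congr rfl fun i _ => sum_comm

theorem trace_transpose_mul_self_transpose_mul [CommSemiring R] (X : Matrix ι J R)
    (Y : Matrix ι K R) :
    ((Xᵀ * Y)ᵀ * (Xᵀ * Y)).trace = ∑ i, ∑ i', (X * Xᵀ) i i' * (Y * Yᵀ) i i' := by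
  rw [transpose_mul, transpose_transpose, Matrix.mul_assoc, trace_mul_comm, Matrix.mul_assoc,
    ← Matrix.mul_assoc X, ← Matrix.mul_assoc, Matrix.mul_assoc (X * Xᵀ)]
  refine sum_congr rfl fun i _ => sum_congr rfl fun i' _ => ?_
  change (X * Xᵀ) i i' * (Y * Yᵀ) i' i = _
  rw [← transpose_apply (Y * Yᵀ) i i', transpose_mul, transpose_transpose]

variable [DecidableEq J] [DecidableEq K]

theorem exists_orthogonal_extension (M : Matrix J K ℝ) (hM : Mᵀ * M = 1) :
    ∃ Q : Matrix J J ℝ, Qᵀ * Q = 1 ∧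
      ∃ e : K → J, Function.Injective e ∧ ∀ k j, Q k (e j) = M k j := by
  set v : K → EuclideanSpace ℝ J := fun j => WithLp.toLp 2 (Mᵀ j)
  have hv : Orthonormal ℝ v := by
    rw [orthonormal_iff_ite]
    intro j j'
    simpa [v, EuclideanSpace.inner_toLp_toLp, dotProduct, Matrix.mul_apply, Matrix.one_apply,
      mul_comm] using congrFun (congrFun hM j) j'
  obtain ⟨e⟩ := Function.Embedding.nonempty_of_card_le <| by
    simpa using hv.linearIndependent.fintype_card_le_finrank
  have hve : Orthonormal ℝ ((Set.range e).domRestrict (Function.extend e v 0)) := by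
    convert hv.comp _ (Equiv.ofInjective e e.injective).symm.injective
    ext ⟨_, j, rfl⟩ : 1
    simp [Set.domRestrict, e.injective.extend_apply]
  obtain ⟨b, hb⟩ := hve.exists_orthonormalBasis_extension_of_card_eq finrank_euclideanSpace
  refine ⟨(EuclideanSpace.basisFun J ℝ).toBasis.toMatrix b, ?_, e, e.injective, fun k j => ?_⟩
  · simpa [conjTranspose_eq_transpose_of_trivial] using
      (EuclideanSpace.basisFun J ℝ).toMatrix_orthonormalBasis_conjTranspose_mul_self b
  · simp [Module.Basis.toMatrix_apply, hb (e j) ⟨j, rfl⟩, e.injective.extend_apply, v]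

theorem mul_transpose_mul_eq_smul_of_trace {a : ℝ} {X : Matrix ι J ℝ} {Y : Matrix ι K ℝ}
    (hX : Xᵀ * X = a • 1) (hY : Yᵀ * Y = a • 1)
    (hXY : ((Xᵀ * Y)ᵀ * (Xᵀ * Y)).trace = a ^ 2 * Fintype.card K) :
    X * (Xᵀ * Y) = a • Y := by
  set G := Xᵀ * Y
  set E := a • Y - X * G
  have hE : Eᵀ * E = a ^ 3 • (1 : Matrix K K ℝ) - a • (Gᵀ * G) := by
    have hGt : Gᵀ = Yᵀ * X := by rw [transpose_mul, transpose_transpose]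
    have hXG : Gᵀ * Xᵀ * (X * G) = a • (Gᵀ * G) := by
      rw [Matrix.mul_assoc, ← Matrix.mul_assoc Xᵀ, hX, Matrix.smul_mul, Matrix.one_mul,
        Matrix.mul_smul]
    rw [transpose_sub, transpose_smul, Matrix.sub_mul, Matrix.mul_sub, Matrix.mul_sub,
      Matrix.smul_mul, Matrix.smul_mul, Matrix.mul_smul, Matrix.mul_smul, hY, transpose_mul, hXG,
      ← Matrix.mul_assoc, ← hGt, Matrix.mul_assoc Gᵀ]
    module
  have htrace : (Eᵀ * E).trace = 0 := by
    rw [hE, trace_sub, trace_smul, trace_smul, hXY, trace_one]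
    rw [smul_eq_mul, smul_eq_mul]
    ring
  rw [← conjTranspose_eq_transpose_of_trivial, trace_conjTranspose_mul_self_eq_zero_iff,
    sub_eq_zero] at htrace
  exact htrace.symm

theorem exists_orthogonal_mul_eq_of_trace {a : ℝ} (ha : a ≠ 0) {X : Matrix ι J ℝ}
    {Y : Matrix ι K ℝ} (hX : Xᵀ * X = a • 1) (hY : Yᵀ * Y = a • 1)
    (hXY : ((Xᵀ * Y)ᵀ * (Xᵀ * Y)).trace = a ^ 2 * Fintype.card K) :
    ∃ Q : Matrix J J ℝ, Qᵀ * Q = 1 ∧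
      ∃ e : K → J, Function.Injective e ∧ ∀ j r, (X * Q) r (e j) = Y r j := by
  have hXXY := mul_transpose_mul_eq_smul_of_trace hX hY hXY
  set M := a⁻¹ • (Xᵀ * Y)
  have hM : Mᵀ * M = 1 := by
    rw [transpose_smul, Matrix.smul_mul, Matrix.mul_smul, transpose_mul, transpose_transpose,
      Matrix.mul_assoc, hXXY, Matrix.mul_smul, hY, smul_smul, smul_smul, smul_smul]
    field_simp
    exact one_smul _ _
  have hXM : X * M = Y := by
    rw [Matrix.mul_smul, hXXY, smul_smul, inv_mul_cancel₀ ha, one_smul]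
  obtain ⟨Q, hQ, e, he, hQM⟩ := M.exists_orthogonal_extension hM
  refine ⟨Q, hQ, e, he, fun j r => ?_⟩
  simp only [Matrix.mul_apply, hQM, ← hXM]

end Matrix

section Design

variable {N n : ℕ} {s : Fin n → ℕ} {C : ∀ i, Fin (s i) → Fin (s i - 1) → ℝ}
  {D : Fin N → ∀ i, Fin (s i)} {T : Finset (Fin n)}

theorem card_filter_eq_of_hasStrength (hs : ∀ i, 0 < s i) (hD : hasStrength s D T.card)
    (y : ∀ i : T, Fin (s i)) :
    #{r | (fun i : T => D r i) = y} = N / ∏ i ∈ T, s i := by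
  classical
  rw [← hD T rfl fun i => if h : i ∈ T then y ⟨i, h⟩ else ⟨0, hs i⟩]
  congr 1
  refine filter_congr fun r _ => ⟨fun h i hi => ?_, fun h => funext fun i => ?_⟩
  · simp [hi, ← h]
  · simpa using h i i.2

theorem prod_dvd_of_hasStrength (hs : ∀ i, 0 < s i) (hD : hasStrength s D T.card) :
    ∏ i ∈ T, s i ∣ N := by
  classical
  have hfib := card_eq_sum_card_fiberwise (f := fun r (i : T) => D r i) (s := univ) (t := univ)
    (fun r _ => mem_coe.2 (mem_univ _))
  simp only [card_filter_eq_of_hasStrength hs hD, sum_const, card_univ, Fintype.card_fin,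
    Fintype.card_pi, prod_coe_sort T s, smul_eq_mul] at hfib
  exact Dvd.intro _ hfib.symm

theorem sum_prod_eq_of_hasStrength (hs : ∀ i, 0 < s i) (hD : hasStrength s D T.card)
    (F : ∀ i : T, Fin (s i) → ℝ) :
    ∑ r, ∏ i, F i (D r i) = N / (∏ i ∈ T, (s i : ℝ)) * ∏ i, ∑ l, F i l := by
  classical
  rw [← sum_fiberwise univ (fun r (i : T) => D r i), Fintype.prod_sum, mul_sum]
  refine sum_congr rfl fun y _ => ?_
  have hfib : ∀ r ∈ ({r | (fun i : T => D r i) = y} : Finset _),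
      ∏ i, F i (D r i) = ∏ i, F i (y i) := fun r hr => by obtain rfl := (mem_filter.1 hr).2; rfl
  rw [sum_congr rfl hfib, sum_const,
    card_filter_eq_of_hasStrength hs hD, nsmul_eq_mul, Nat.cast_div_charZero
    (prod_dvd_of_hasStrength hs hD), Nat.cast_prod]

theorem sum_comp_eq_of_hasStrength (hs : ∀ i, 0 < s i) (hD : hasStrength s D T.card) {c : Fin n}
    (hc : c ∈ T) (f : Fin (s c) → ℝ) :
    ∑ r, f (D r c) = N / s c * ∑ l, f l := by
  classical
  set F : ∀ i, Fin (s i) → ℝ := Function.update (fun _ _ => 1) c f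
  have hF : ∀ i ≠ c, F i = fun _ => 1 := fun i hi => Function.update_of_ne hi _ _
  have hlhs : ∀ r, ∏ i : T, F i (D r i) = f (D r c) := fun r => by
    rw [Fintype.prod_eq_single ⟨c, hc⟩ fun i hi => by simp [hF i (Subtype.coe_ne_coe.2 hi)]]
    simp [F]
  have hrhs : ∏ i : T, ∑ l, F i l = (∑ l, f l) * ∏ i ∈ T.erase c, (s i : ℝ) := by
    rw [prod_coe_sort T fun i => ∑ l, F i l, ← mul_prod_erase T _ hc]
    congr 1
    · simp [F]
    · exact prod_congr rfl fun i hi => by simp [hF i (ne_of_mem_erase hi)]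
  have hsT : ∏ i ∈ T, (s i : ℝ) = s c * ∏ i ∈ T.erase c, (s i : ℝ) :=
    (mul_prod_erase T _ hc).symm
  have hpos : ∏ i ∈ T.erase c, (s i : ℝ) ≠ 0 :=
    prod_ne_zero_iff.2 fun i _ => by have := hs i; positivity
  rw [← sum_congr rfl fun r _ => hlhs r, sum_prod_eq_of_hasStrength hs hD, hrhs, hsT]
  field_simp

variable (C D)

def interactionMatrix (T : Finset (Fin n)) : Matrix (Fin N) (∀ i : T, Fin (s i - 1)) ℝ :=
  of fun r k => intCol C D T k r

def mainEffectMatrix (i : Fin n) : Matrix (Fin N) (Fin (s i - 1)) ℝ :=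
  of fun r j => C i (D r i) j

theorem interactionMatrix_mul_transpose_apply (T : Finset (Fin n)) (r r' : Fin N) :
    (interactionMatrix C D T * (interactionMatrix C D T)ᵀ) r r' =
      ∏ i ∈ T, (mainEffectMatrix C D i * (mainEffectMatrix C D i)ᵀ) r r' := by
  classical
  simp only [mul_apply, transpose_apply, interactionMatrix, mainEffectMatrix, of_apply, intCol,
    ← prod_mul_distrib]
  rw [← prod_coe_sort, Fintype.prod_sum]

variable {C D}

theorem transpose_mul_interactionMatrix (hs : ∀ i, 0 < s i) (hD : hasStrength s D T.card)
    (hC : ∀ i ∈ T, isNOC (C i)) :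
    (interactionMatrix C D T)ᵀ * interactionMatrix C D T = (N : ℝ) • 1 := by
  classical
  ext k k'
  simp only [mul_apply, transpose_apply, interactionMatrix, of_apply, intCol, ← prod_mul_distrib]
  rw [sum_prod_eq_of_hasStrength hs hD fun i l => C i l (k i) * C i l (k' i),
    Fintype.prod_congr _ _ fun i : T => (hC i i.2).2 (k i) (k' i), prod_ite_zero]
  have hprod : ∏ i ∈ T, (s i : ℝ) ≠ 0 :=
    prod_ne_zero_iff.2 fun i _ => by have := hs i; positivity
  have hkk : (∀ i ∈ univ, k i = k' i) ↔ k = k' := by simp [funext_iff]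
  simp only [hkk, Matrix.smul_apply, one_apply, smul_eq_mul, mul_ite, mul_one, mul_zero]
  split_ifs
  · rw [prod_coe_sort T fun i => (s i : ℝ), div_mul_cancel₀ _ hprod]
  · rfl

theorem transpose_mul_mainEffectMatrix (hs : ∀ i, 0 < s i) (hD : hasStrength s D T.card)
    {c : Fin n} (hc : c ∈ T) (hC : isNOC (C c)) :
    (mainEffectMatrix C D c)ᵀ * mainEffectMatrix C D c = (N : ℝ) • 1 := by
  ext j j'
  simp only [mul_apply, transpose_apply, mainEffectMatrix, of_apply]
  rw [sum_comp_eq_of_hasStrength hs hD hc fun l => C c l j * C c l j', hC.2]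
  have : (s c : ℝ) ≠ 0 := by have := hs c; positivity
  simp only [Matrix.smul_apply, one_apply, smul_eq_mul, mul_ite, mul_one, mul_zero,
    div_mul_cancel₀ _ this]

end Design

theorem statement5_general {N n R : ℕ} (hN : 1 ≤ N) (hR : 2 ≤ R)
    {s : Fin n → ℕ} (hs : ∀ i, 2 ≤ s i)
    (D : Fin N → ∀ i, Fin (s i)) (hD : hasStrength s D (R - 1))
    (C : ∀ i, Fin (s i) → Fin (s i - 1) → ℝ) (hC : ∀ i, isNOC (C i))
    (U : Finset (Fin n)) (hU : U.card = R) (c : Fin n) (hc : c ∈ U)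
    (ha : projFreq C D U = (s c : ℝ) - 1) :
    ∃ Q : Matrix (∀ i : (U.erase c : Finset (Fin n)), Fin (s i.1 - 1))
        (∀ i : (U.erase c : Finset (Fin n)), Fin (s i.1 - 1)) ℝ,
      Qᵀ * Q = 1 ∧
      ∃ e : Fin (s c - 1) → (∀ i : (U.erase c : Finset (Fin n)), Fin (s i.1 - 1)),
        Function.Injective e ∧
        ∀ (j : Fin (s c - 1)) (r : Fin N),
          ((Matrix.of fun r' k => intCol C D (U.erase c) k r') * Q) r (e j)
            = C c (D r c) j := by
  have hN0 : (N : ℝ) ≠ 0 := Nat.cast_ne_zero.2 (Nat.one_le_iff_ne_zero.1 hN)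
  have hs0 : ∀ i, 0 < s i := fun i => zero_lt_two.trans_le (hs i)
  have hDC : hasStrength s D (U.erase c).card := by rwa [card_erase_of_mem hc, hU]
  obtain ⟨S, hcS, -, hS⟩ := exists_subsuperset_card_eq (singleton_subset_iff.2 hc)
    (by rw [card_singleton]; omega) (by omega : R - 1 ≤ U.card)
  refine exists_orthogonal_mul_eq_of_trace (X := interactionMatrix C D (U.erase c))
    (Y := mainEffectMatrix C D c) hN0
    (transpose_mul_interactionMatrix hs0 hDC fun i _ => hC i)
    (transpose_mul_mainEffectMatrix hs0 (hS ▸ hD) (singleton_subset_iff.1 hcS) (hC c)) ?_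
  rw [trace_transpose_mul_self_transpose_mul]
  simp_rw [interactionMatrix_mul_transpose_apply, prod_erase_mul _ _ hc,
    ← interactionMatrix_mul_transpose_apply, ← sum_sq_sum_apply]
  rw [projFreq, div_eq_iff (pow_ne_zero 2 hN0)] at ha
  rw [Fintype.card_fin, Nat.cast_sub (hs0 c), Nat.cast_one, mul_comm]
  exact ha

/-- if `c ∈ U` has the minimum number of levels `s_min` of `U` and
`a_R(U) = s_min - 1`, then the interaction model matrix `X_C` of `C = U \ {c}` can be
orthogonally transformed (by an orthogonal matrix `Q`) so that `s_min - 1` of the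
columns of `X_C · Q` are exactly the columns of the main-effects model matrix of `c`. -/
theorem statement5 {N n R : ℕ} (hN : 1 ≤ N) (hR : 2 ≤ R) (hn : R ≤ n)
    {s : Fin n → ℕ} (hs : ∀ i, 2 ≤ s i)
    (D : Fin N → ∀ i, Fin (s i)) (hD : hasStrength s D (R - 1))
    (C : ∀ i, Fin (s i) → Fin (s i - 1) → ℝ) (hC : ∀ i, isNOC (C i))
    (U : Finset (Fin n)) (hU : U.card = R) (c : Fin n) (hc : c ∈ U)
    (hmin : ∀ k ∈ U, s c ≤ s k)
    (ha : projFreq C D U = (s c : ℝ) - 1) :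
    ∃ Q : Matrix (∀ i : (U.erase c : Finset (Fin n)), Fin (s i.1 - 1))
        (∀ i : (U.erase c : Finset (Fin n)), Fin (s i.1 - 1)) ℝ,
      Qᵀ * Q = 1 ∧
      ∃ e : Fin (s c - 1) → (∀ i : (U.erase c : Finset (Fin n)), Fin (s i.1 - 1)),
        Function.Injective e ∧
        ∀ (j : Fin (s c - 1)) (r : Fin N),
          ((Matrix.of fun r' k => intCol C D (U.erase c) k r') * Q) r (e j)
            = C c (D r c) j :=
  statement5_general hN hR hs D hD C hC U hU c hc ha
end

section
/- Let D be a design of strength R−1 (R ≥ 2) with n ≥ R factors, each factor given a normalized orthogonal coding, let U be an R-element set of factors, c ∈ U, and C = U ∖ {c}. Separately, give each factor i an arbitrary coding B_i : Fin (s i) → Fin (s i − 1) → ℝ such that the s i × s i matrix whose first column is all ones and whose remaining columns are l ↦ B_i l j is invertible; let Y be the column-centered main-effects model matrix of c built from B_c (entries B_c (D r c) j, each column shifted to sum to zero) and let X consist of the column-centered nonconstant columns of the full model matrix of C built from the codings B_i (i ∈ C). If the Gram matrices S_yy = YᵀY and S_xx = XᵀX are invertible, then the sum of the squared canonical correlations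 of (Y, X), namely tr(S_yy⁻¹ S_yx S_xx⁻¹ S_xy) with S_yx = YᵀX = S_xyᵀ, equals the projection frequency a_R(U) computed from the normalized orthogonal codings. -/
/-!
With normalized orthogonal codings and strength `R - 1`, the main-effect columns of `c` are
pairwise orthogonal of squared length `N`, and so are the interaction columns of the nonempty
subsets of `C = U \ {c}`: the inner product of two such columns is a sum over runs of a product
over at most `R - 1` factors, which the strength factorizes into per-factor inner products of the
codings. Any other coding gives, after centering, the same two column spaces, and the sum of
squared canonical correlations depends only on those, so it equals `‖YᵀX‖² / N²` computed in the
orthogonal codings. Only the interaction columns of all of `C` have nonzero inner products with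
the main-effect columns of `c`, and these inner products are the column sums of the interaction
model matrix of `U`.
-/

open Finset Matrix

/-- Column-centering of a matrix with `N` rows. -/
noncomputable def center {N : ℕ} {κ : Type*} (M : Matrix (Fin N) κ ℝ) :
    Matrix (Fin N) κ ℝ :=
  Matrix.of fun r k => M r k - (∑ r', M r' k) / (N : ℝ)

/-- Index type for the nonconstant columns of the full model matrix of `Cset`:
one column for each tuple of contrasts of each nonempty subset of `Cset`. -/
abbrev FullIdx {n : ℕ} (s : Fin n → ℕ) (Cset : Finset (Fin n)) : Type :=
  Σ S : {S : Finset (Fin n) // S ⊆ Cset ∧ S.Nonempty}, ∀ i : S.1, Fin (s i.1 - 1)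

/-- Column-centered main-effects model matrix of factor `c` (coding `B`). -/
noncomputable def Ymat {N n : ℕ} {s : Fin n → ℕ} (B : ∀ i, Fin (s i) → Fin (s i - 1) → ℝ)
    (D : Fin N → ∀ i, Fin (s i)) (c : Fin n) : Matrix (Fin N) (Fin (s c - 1)) ℝ :=
  center (Matrix.of fun r j => B c (D r c) j)

/-- Column-centered nonconstant columns of the full model matrix of `Cset` (coding `B`). -/
noncomputable def Xmat {N n : ℕ} {s : Fin n → ℕ} (B : ∀ i, Fin (s i) → Fin (s i - 1) → ℝ)
    (D : Fin N → ∀ i, Fin (s i)) (Cset : Finset (Fin n)) :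
    Matrix (Fin N) (FullIdx s Cset) ℝ :=
  center (Matrix.of fun r k => intCol B D k.1.1 k.2 r)

section Centering

variable {N : ℕ} {ι κ : Type*}

theorem center_eq_self {M : Matrix (Fin N) κ ℝ} (hM : ∀ k, ∑ r, M r k = 0) : center M = M := by
  ext r k
  simp [center, hM k]

theorem Matrix.exists_eq_mul_of_col_mem_span {m R : Type*} [CommSemiring R] [Fintype κ]
    {M : Matrix m ι R} {X : Matrix m κ R} (hM : ∀ k, M.col k ∈ Submodule.span R (Set.range X.col)) :
    ∃ W : Matrix κ ι R, M = X * W := by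
  simp_rw [← Matrix.range_mulVecLin, LinearMap.mem_range, Matrix.mulVecLin_apply] at hM
  choose w hw using hM
  refine ⟨Matrix.of fun j k => w k j, Matrix.ext fun r k => ?_⟩
  exact (congrFun (hw k) r).symm

theorem center_col_mem_span [Fintype κ] (hN : N ≠ 0) {X : Matrix (Fin N) κ ℝ}
    (hX : ∀ k, ∑ r, X r k = 0) {M : Matrix (Fin N) ι ℝ}
    (hM : ∀ k, M.col k ∈ Submodule.span ℝ (insert 1 (Set.range X.col)))
    (k : ι) : (center M).col k ∈ Submodule.span ℝ (Set.range X.col) := by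
  let φ : (Fin N → ℝ) →ₗ[ℝ] (Fin N → ℝ) :=
    { toFun := fun v r => v r - (∑ r', v r') / N
      map_add' := fun v w => by ext; simp [sum_add_distrib]; ring
      map_smul' := fun a v => by ext; simp [← mul_sum]; ring }
  have hφ : Submodule.span ℝ (insert 1 (Set.range X.col)) ≤
      (Submodule.span ℝ (Set.range X.col)).comap φ := by
    refine Submodule.span_le.2 (Set.insert_subset ?_ ?_)
    · have : φ 1 = 0 := by ext; simp [φ, hN]
      simp [this]
    · rintro _ ⟨k, rfl⟩
      have : φ (X.col k) = X.col k := by ext; simp [φ, Matrix.col, hX k]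
      simpa [this] using Submodule.subset_span (Set.mem_range_self k)
  exact hφ (hM k)

end Centering

section CanonicalCorrelation

variable {m ι κ : Type*} [Fintype m] [Fintype ι] [Fintype κ] [DecidableEq ι] [DecidableEq κ]

theorem isUnit_det_of_gram_mul {A : Matrix m ι ℝ} {ν : ℝ} (hA : Aᵀ * A = ν • 1)
    {T : Matrix ι ι ℝ} (h : IsUnit ((A * T)ᵀ * (A * T)).det) : IsUnit T.det := by
  rw [Matrix.transpose_mul, Matrix.mul_assoc, ← Matrix.mul_assoc Aᵀ, hA, Matrix.det_mul,
    Matrix.det_mul] at h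
  exact isUnit_of_mul_isUnit_right (isUnit_of_mul_isUnit_right h)

theorem inv_gram_mul {A : Matrix m ι ℝ} {ν : ℝ} (hν : ν ≠ 0) (hA : Aᵀ * A = ν • 1)
    (T : Matrix ι ι ℝ) : ((A * T)ᵀ * (A * T))⁻¹ = T⁻¹ * (ν⁻¹ • 1) * Tᵀ⁻¹ := by
  have hinv : (ν • (1 : Matrix ι ι ℝ))⁻¹ = ν⁻¹ • 1 :=
    Matrix.inv_eq_right_inv (by rw [smul_mul_smul, Matrix.one_mul, mul_inv_cancel₀ hν, one_smul])
  rw [Matrix.transpose_mul, Matrix.mul_assoc, ← Matrix.mul_assoc Aᵀ, hA, Matrix.mul_inv_rev,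
    Matrix.mul_inv_rev, hinv, Matrix.mul_assoc]

theorem trace_cca_mul_eq (Y : Matrix m ι ℝ) (X : Matrix m κ ℝ) (T : Matrix ι ι ℝ)
    (W : Matrix κ κ ℝ) {ν : ℝ} (hν : ν ≠ 0) (hY : Yᵀ * Y = ν • 1) (hX : Xᵀ * X = ν • 1)
    (hYT : IsUnit ((Y * T)ᵀ * (Y * T)).det) (hXW : IsUnit ((X * W)ᵀ * (X * W)).det) :
    Matrix.trace (((Y * T)ᵀ * (Y * T))⁻¹ * ((Y * T)ᵀ * (X * W)) *
        ((X * W)ᵀ * (X * W))⁻¹ * ((X * W)ᵀ * (Y * T)))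
      = (ν ^ 2)⁻¹ * ∑ j, ∑ k, (Yᵀ * X) j k ^ 2 := by
  have hT := isUnit_det_of_gram_mul hY hYT
  have hW := isUnit_det_of_gram_mul hX hXW
  have hTt : IsUnit Tᵀ.det := by rwa [Matrix.det_transpose]
  have hWt : IsUnit Wᵀ.det := by rwa [Matrix.det_transpose]
  rw [inv_gram_mul hν hY, inv_gram_mul hν hX]
  simp only [Matrix.transpose_mul, Matrix.mul_assoc]
  rw [Matrix.nonsing_inv_mul_cancel_left _ _ hTt, Matrix.mul_nonsing_inv_cancel_left _ _ hW,
    Matrix.nonsing_inv_mul_cancel_left _ _ hWt]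
  simp only [Matrix.smul_mul, Matrix.mul_smul, Matrix.one_mul, Matrix.trace_smul, smul_eq_mul]
  rw [Matrix.trace_mul_comm]
  simp only [Matrix.mul_assoc, Matrix.mul_nonsing_inv _ hT, Matrix.mul_one]
  rw [show Yᵀ * (X * (Xᵀ * Y)) = (Yᵀ * X) * (Yᵀ * X)ᵀ by
    rw [Matrix.transpose_mul, Matrix.transpose_transpose, Matrix.mul_assoc]]
  simp only [Matrix.trace, Matrix.diag_apply, Matrix.mul_apply, Matrix.transpose_apply, ← sq]
  ring

end CanonicalCorrelation

section Coding

variable {m : ℕ} {C : Fin m → Fin (m - 1) → ℝ}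

/-- The `m × m` matrix of a coding with a leading all-ones column (indexed by `none`). -/
def augCoding (C : Fin m → Fin (m - 1) → ℝ) : Matrix (Fin m) (Option (Fin (m - 1))) ℝ :=
  Matrix.of fun l o => o.elim 1 fun j => C l j

@[simp] theorem augCoding_none (l : Fin m) : augCoding C l none = 1 := rfl

@[simp] theorem augCoding_some (l : Fin m) (j : Fin (m - 1)) : augCoding C l (some j) = C l j :=
  rfl

theorem isNOC.transpose_mul_augCoding (hC : isNOC C) :
    (augCoding C)ᵀ * augCoding C = (m : ℝ) • 1 := by
  ext (_ | j) (_ | j') <;>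
    simp [Matrix.mul_apply, Matrix.one_apply, hC.1, hC.2, eq_comm]

theorem isNOC.augCoding_mulVec_surjective (hC : isNOC C) (hm : 0 < m) :
    Function.Surjective (augCoding C).mulVec := by
  have hleft : ((m : ℝ)⁻¹ • (augCoding C)ᵀ) * augCoding C = 1 := by
    rw [Matrix.smul_mul, hC.transpose_mul_augCoding, smul_smul,
      inv_mul_cancel₀ (by positivity), one_smul]
  exact Matrix.mulVec_surjective_iff_exists_right_inverse.2
    ⟨_, (Matrix.mul_eq_one_comm_of_equiv (Fintype.equivOfCardEq (by simp; omega))).1 hleft⟩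

end Coding

def Finset.piEquivProdErase {ι : Type*} [DecidableEq ι] {β : ι → Type*} {U : Finset ι} {c : ι}
    (hc : c ∈ U) : (∀ i : U, β i) ≃ β c × ∀ i : U.erase c, β i where
  toFun x := (x ⟨c, hc⟩, fun i => x ⟨i, mem_of_mem_erase i.2⟩)
  invFun p i := if h : i.1 = c then h ▸ p.1 else p.2 ⟨i, mem_erase.2 ⟨h, i.2⟩⟩
  left_inv x := by
    ext ⟨i, hi⟩
    by_cases h : i = c
    · subst h
      simp
    · simp [h]
  right_inv p := by
    ext ⟨i, hi⟩
    · simp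
    · simp [(mem_erase.1 hi).1]

section Design

variable {N n t : ℕ} {s : Fin n → ℕ} {D : Fin N → ∀ i, Fin (s i)}
  {C : ∀ i, Fin (s i) → Fin (s i - 1) → ℝ}

theorem hasStrength.sum_prod_eq_of_card_eq (hD : hasStrength s D t) (hs : ∀ i, 0 < s i)
    {T : Finset (Fin n)} (hT : T.card = t) (f : ∀ i, Fin (s i) → ℝ) :
    ∑ r, ∏ i ∈ T, f i (D r i) = ((N / ∏ i ∈ T, s i : ℕ) : ℝ) * ∏ i ∈ T, ∑ l, f i l := by
  classical
  have hcount : ∀ x : ∀ i : T, Fin (s i),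
      ∑ r, ∏ i : T, (if D r i = x i then (1 : ℝ) else 0) = ((N / ∏ i ∈ T, s i : ℕ) : ℝ) := by
    intro x
    let x' : ∀ i, Fin (s i) := fun i => if h : i ∈ T then x ⟨i, h⟩ else ⟨0, hs i⟩
    simp only [prod_boole, sum_boole, mem_univ, true_implies]
    rw [← hD T hT x']
    congr 2
    ext r
    simp only [mem_filter, mem_univ, true_and, Subtype.forall]
    exact forall₂_congr fun i hi => by simp [x', hi]
  calc ∑ r, ∏ i ∈ T, f i (D r i)
      = ∑ r, ∏ i : T, ∑ l, f i l * (if D r i = l then 1 else 0) := by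
        simp only [mul_ite, mul_one, mul_zero, sum_ite_eq, mem_univ, if_true]
        exact sum_congr rfl fun r _ => (prod_coe_sort T _).symm
    _ = ∑ x : ∀ i : T, Fin (s i), (∏ i : T, f i (x i)) *
          ∑ r, ∏ i : T, (if D r i = x i then (1 : ℝ) else 0) := by
        simp_rw [prod_univ_sum, Fintype.piFinset_univ, prod_mul_distrib, mul_sum]
        exact sum_comm
    _ = ((N / ∏ i ∈ T, s i : ℕ) : ℝ) * ∏ i ∈ T, ∑ l, f i l := by
        simp_rw [hcount, ← sum_mul, ← Fintype.piFinset_univ, ← prod_univ_sum,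
          prod_coe_sort T (fun i => ∑ l, f i l), mul_comm]

theorem hasStrength.sum_prod_eq (hD : hasStrength s D t) (hs : ∀ i, 0 < s i) (ht : t ≤ n)
    {S : Finset (Fin n)} (hS : S.card ≤ t) (f : ∀ i, Fin (s i) → ℝ) :
    ∑ r, ∏ i ∈ S, f i (D r i) = N * ∏ i ∈ S, (∑ l, f i l) / s i := by
  classical
  obtain ⟨T, hST, -, hT⟩ := exists_subsuperset_card_eq (subset_univ S) hS (by simpa using ht)
  let g : ∀ i, Fin (s i) → ℝ := fun i l => if i ∈ S then f i l else 1
  have hs' : ∀ i, (s i : ℝ) ≠ 0 := fun i => by have := hs i; positivity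
  have hfg : ∀ r, ∏ i ∈ S, f i (D r i) = ∏ i ∈ T, g i (D r i) := fun r => by
    rw [← prod_subset hST fun i _ hi => if_neg hi]
    exact prod_congr rfl fun i hi => (if_pos hi).symm
  -- `N / ∏ s i` is a truncated ℕ-quotient; the case `f = 1` shows that it is exact
  have hN : (N : ℝ) = ((N / ∏ i ∈ T, s i : ℕ) : ℝ) * ∏ i ∈ T, (s i : ℝ) := by
    simpa using hD.sum_prod_eq_of_card_eq hs hT fun _ _ => 1
  have hgS : ∏ i ∈ T, (∑ l, g i l) / s i = ∏ i ∈ S, (∑ l, f i l) / s i := by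
    rw [← prod_subset hST fun i _ hi => by simp [g, hi, hs' i]]
    exact prod_congr rfl fun i hi => by simp [g, hi]
  rw [sum_congr rfl fun r _ => hfg r, hD.sum_prod_eq_of_card_eq hs hT, hN, ← hgS,
    mul_assoc, ← prod_mul_distrib]
  congr 2 with i
  field_simp [hs' i]

/-- The interaction column of the factors `i` with `k i ≠ none`, using contrast `k i` of each. -/
def optionCol (C : ∀ i, Fin (s i) → Fin (s i - 1) → ℝ) (D : Fin N → ∀ i, Fin (s i))
    (k : ∀ i, Option (Fin (s i - 1))) (r : Fin N) : ℝ :=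
  ∏ i, augCoding (C i) (D r i) (k i)

def optionTuple {S : Finset (Fin n)} (j : ∀ i : S, Fin (s i.1 - 1)) :
    ∀ i, Option (Fin (s i - 1)) :=
  fun i => if h : i ∈ S then some (j ⟨i, h⟩) else none

theorem optionCol_none : optionCol C D (fun _ => none) = 1 := by
  ext r
  simp [optionCol]

theorem optionCol_update {k : ∀ i, Option (Fin (s i - 1))} {c : Fin n} (hk : k c = none)
    (o : Option (Fin (s c - 1))) (r : Fin N) :
    optionCol C D (Function.update k c o) r = augCoding (C c) (D r c) o * optionCol C D k r := by
  classical
  rw [optionCol, optionCol, ← mul_prod_erase _ _ (mem_univ c),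
    ← mul_prod_erase _ _ (mem_univ c), hk, augCoding_none, one_mul,
    Function.update_self]
  congr 1
  exact prod_congr rfl fun i hi => by rw [Function.update_of_ne (ne_of_mem_erase hi)]

def mainEffectTuple (c : Fin n) (j : Fin (s c - 1)) : ∀ i, Option (Fin (s i - 1)) :=
  Function.update (fun _ => none) c (some j)

theorem mainEffectTuple_eq_none {c i : Fin n} (j : Fin (s c - 1)) (hi : i ≠ c) :
    mainEffectTuple c j i = none :=
  Function.update_of_ne hi _ _

theorem mainEffectTuple_injective (c : Fin n) :
    Function.Injective (mainEffectTuple (s := s) c) := fun j j' h =>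
  Option.some.inj (by simpa [mainEffectTuple] using congrFun h c)

theorem optionCol_mainEffectTuple (c : Fin n) (j : Fin (s c - 1)) (r : Fin N) :
    optionCol C D (mainEffectTuple c j) r = C c (D r c) j := by
  rw [mainEffectTuple, optionCol_update rfl, optionCol_none, Pi.one_apply, mul_one,
    augCoding_some]

theorem intCol_eq_optionCol (S : Finset (Fin n)) (j : ∀ i : S, Fin (s i.1 - 1)) :
    intCol C D S j = optionCol C D (optionTuple j) := by
  ext r
  rw [optionCol, ← prod_subset (subset_univ S) fun i _ hi => by
    simp [optionTuple, hi], ← prod_coe_sort]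
  exact prod_congr rfl fun i _ => by simp [optionTuple]

theorem optionTuple_eq_none {S : Finset (Fin n)} (j : ∀ i : S, Fin (s i.1 - 1)) {i : Fin n}
    (hi : i ∉ S) : optionTuple j i = none :=
  dif_neg hi

theorem optionTuple_ne_none {S : Finset (Fin n)} (hS : S.Nonempty)
    (j : ∀ i : S, Fin (s i.1 - 1)) : optionTuple j ≠ fun _ => none := by
  obtain ⟨i, hi⟩ := hS
  exact fun h => by simpa [optionTuple, hi] using congrFun h i

theorem optionTuple_injective {V : Finset (Fin n)} :
    Function.Injective fun x : FullIdx s V => optionTuple x.2 := by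
  rintro ⟨⟨S, hS⟩, j⟩ ⟨⟨S', hS'⟩, j'⟩ h
  have hmem : ∀ i, i ∈ S ↔ i ∈ S' := fun i => by
    have := congrFun h i
    by_cases hi : i ∈ S <;> by_cases hi' : i ∈ S' <;> simp_all [optionTuple]
  obtain rfl : S = S' := ext hmem
  have hj : j = j' := funext fun i => by simpa [optionTuple] using congrFun h i
  rw [hj]

theorem exists_optionTuple_eq {V : Finset (Fin n)} {k : ∀ i, Option (Fin (s i - 1))}
    (hk : ∀ i ∉ V, k i = none) (hne : k ≠ fun _ => none) :
    ∃ x : FullIdx s V, optionTuple x.2 = k := by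
  classical
  let S := univ.filter fun i => (k i).isSome
  have hSV : S ⊆ V := fun i hi => by
    by_contra hiV
    simp [S, hk i hiV] at hi
  have hS : S.Nonempty := by
    obtain ⟨i, hi⟩ := Function.ne_iff.1 hne
    exact ⟨i, by simpa [S, Option.isSome_iff_ne_none] using hi⟩
  refine ⟨⟨⟨S, hSV, hS⟩, fun i => (k i).get (mem_filter.1 i.2).2⟩, funext fun i => ?_⟩
  by_cases hi : (k i).isSome
  · simp [optionTuple, S, hi]
  · simp_all [optionTuple, S]

theorem hasStrength.sum_optionCol_mul_optionCol (hD : hasStrength s D t) (hs : ∀ i, 0 < s i)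
    (hC : ∀ i, isNOC (C i)) (ht : t ≤ n) {V : Finset (Fin n)} (hV : V.card ≤ t)
    {k k' : ∀ i, Option (Fin (s i - 1))} (hk : ∀ i ∉ V, k i = none)
    (hk' : ∀ i ∉ V, k' i = none) :
    ∑ r, optionCol C D k r * optionCol C D k' r = if k = k' then (N : ℝ) else 0 := by
  classical
  have hrow : ∀ r, optionCol C D k r * optionCol C D k' r =
      ∏ i ∈ V, augCoding (C i) (D r i) (k i) * augCoding (C i) (D r i) (k' i) := fun r => by
    rw [optionCol, optionCol, ← prod_mul_distrib]
    exact (prod_subset (subset_univ V) fun i _ hi => by simp [hk i hi, hk' i hi]).symm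
  have hfactor : ∀ i, (∑ l, augCoding (C i) l (k i) * augCoding (C i) l (k' i)) / s i =
      if k i = k' i then 1 else 0 := fun i => by
    have := congrFun₂ (hC i).transpose_mul_augCoding (k i) (k' i)
    rw [Matrix.mul_apply] at this
    simp only [Matrix.transpose_apply, Matrix.smul_apply, Matrix.one_apply, smul_eq_mul] at this
    rw [this]
    have : (s i : ℝ) ≠ 0 := by have := hs i; positivity
    split_ifs <;> field_simp
  rw [sum_congr rfl fun r _ => hrow r,
    hD.sum_prod_eq hs ht hV fun i l => augCoding (C i) l (k i) * augCoding (C i) l (k' i),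
    prod_congr rfl fun i _ => hfactor i]
  split_ifs with h
  · simp [h]
  · obtain ⟨i, hi⟩ := Function.ne_iff.1 h
    have hiV : i ∈ V := by
      by_contra hiV
      exact hi ((hk i hiV).trans (hk' i hiV).symm)
    rw [prod_eq_zero hiV (if_neg hi), mul_zero]

theorem prod_mem_span_optionCol (hs : ∀ i, 0 < s i) (hC : ∀ i, isNOC (C i))
    {V : Finset (Fin n)} (f : ∀ i, Fin (s i) → ℝ) (hf : ∀ i ∉ V, f i = 1) :
    (fun r => ∏ i, f i (D r i)) ∈
      Submodule.span ℝ (optionCol C D '' {k | ∀ i ∉ V, k i = none}) := by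
  classical
  choose α hα using fun i => (hC i).augCoding_mulVec_surjective (hs i) (f i)
  -- off `V` use the coefficients of the constant column, so that only tuples supported on `V`
  -- appear in the expansion
  let β : ∀ i, Option (Fin (s i - 1)) → ℝ := fun i => if i ∈ V then α i else Pi.single none 1
  have hβ : ∀ i, augCoding (C i) *ᵥ β i = f i := fun i => by
    by_cases hi : i ∈ V
    · simp [β, hi, hα]
    · ext l
      simp [β, hi, hf i hi]
  have hexpand : (fun r => ∏ i, f i (D r i)) = ∑ k, (∏ i, β i (k i)) • optionCol C D k := by
    ext r
    simp_rw [← hβ, Matrix.mulVec, dotProduct, prod_univ_sum, Fintype.piFinset_univ,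
      Finset.sum_apply, Pi.smul_apply, smul_eq_mul, optionCol, ← prod_mul_distrib,
      mul_comm]
  rw [hexpand]
  refine Submodule.sum_mem _ fun k _ => ?_
  by_cases hk : ∀ i ∉ V, k i = none
  · exact Submodule.smul_mem _ _ (Submodule.subset_span ⟨k, hk, rfl⟩)
  · obtain ⟨i, hiV, hki⟩ := not_forall₂.1 hk
    rw [prod_eq_zero (mem_univ i) (by simp [β, hiV, hki]), zero_smul]
    exact Submodule.zero_mem _

theorem hasStrength.sum_coding_mul_coding (hD : hasStrength s D t) (hs : ∀ i, 0 < s i)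
    (hC : ∀ i, isNOC (C i)) (ht : t ≤ n) (ht1 : 1 ≤ t) (c : Fin n) (j j' : Fin (s c - 1)) :
    ∑ r, C c (D r c) j * C c (D r c) j' = if j = j' then (N : ℝ) else 0 := by
  simp_rw [← optionCol_mainEffectTuple (C := C) (D := D)]
  rw [hD.sum_optionCol_mul_optionCol hs hC ht (V := {c}) (by simpa using ht1)
    (fun _ hi => mainEffectTuple_eq_none j (notMem_singleton.1 hi))
    (fun _ hi => mainEffectTuple_eq_none j' (notMem_singleton.1 hi))]
  exact if_congr (mainEffectTuple_injective c).eq_iff rfl rfl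

theorem hasStrength.sum_coding_eq_zero (hD : hasStrength s D t) (hs : ∀ i, 0 < s i)
    (hC : ∀ i, isNOC (C i)) (ht : t ≤ n) (ht1 : 1 ≤ t) (c : Fin n) (j : Fin (s c - 1)) :
    ∑ r, C c (D r c) j = 0 := by
  have := hD.sum_optionCol_mul_optionCol hs hC ht (V := {c}) (by simpa using ht1)
    (fun _ hi => mainEffectTuple_eq_none j (notMem_singleton.1 hi)) fun _ _ => rfl
  have hne : mainEffectTuple c j ≠ fun _ => none := fun h => by
    simpa [mainEffectTuple] using congrFun h c
  simpa [optionCol_none, optionCol_mainEffectTuple, hne] using this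

theorem hasStrength.sum_intCol_mul_intCol (hD : hasStrength s D t) (hs : ∀ i, 0 < s i)
    (hC : ∀ i, isNOC (C i)) (ht : t ≤ n) {V : Finset (Fin n)} (hV : V.card ≤ t)
    (x y : FullIdx s V) :
    ∑ r, intCol C D x.1.1 x.2 r * intCol C D y.1.1 y.2 r = if x = y then (N : ℝ) else 0 := by
  simp_rw [intCol_eq_optionCol]
  rw [hD.sum_optionCol_mul_optionCol hs hC ht hV
    (fun i hi => optionTuple_eq_none _ fun h => hi (x.1.2.1 h))
    (fun i hi => optionTuple_eq_none _ fun h => hi (y.1.2.1 h))]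
  exact if_congr optionTuple_injective.eq_iff rfl rfl

theorem hasStrength.sum_intCol_eq_zero (hD : hasStrength s D t) (hs : ∀ i, 0 < s i)
    (hC : ∀ i, isNOC (C i)) (ht : t ≤ n) {S : Finset (Fin n)} (hS : S.Nonempty)
    (hSt : S.card ≤ t) (j : ∀ i : S, Fin (s i.1 - 1)) :
    ∑ r, intCol C D S j r = 0 := by
  have := hD.sum_optionCol_mul_optionCol hs hC ht hSt (k := optionTuple j)
    (fun i hi => optionTuple_eq_none _ hi) fun _ _ => rfl
  simpa [optionCol_none, optionTuple_ne_none hS j, intCol_eq_optionCol] using this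

theorem hasStrength.Ymat_eq (hD : hasStrength s D t) (hs : ∀ i, 0 < s i)
    (hC : ∀ i, isNOC (C i)) (ht : t ≤ n) (ht1 : 1 ≤ t) (c : Fin n) :
    Ymat C D c = Matrix.of fun r j => C c (D r c) j :=
  center_eq_self (hD.sum_coding_eq_zero hs hC ht ht1 c)

theorem hasStrength.Xmat_eq (hD : hasStrength s D t) (hs : ∀ i, 0 < s i)
    (hC : ∀ i, isNOC (C i)) (ht : t ≤ n) {V : Finset (Fin n)} (hV : V.card ≤ t) :
    Xmat C D V = Matrix.of fun r x => intCol C D x.1.1 x.2 r :=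
  center_eq_self fun x =>
    hD.sum_intCol_eq_zero hs hC ht x.1.2.2 ((card_le_card x.1.2.1).trans hV) x.2

theorem hasStrength.transpose_Ymat_mul_Ymat (hD : hasStrength s D t) (hs : ∀ i, 0 < s i)
    (hC : ∀ i, isNOC (C i)) (ht : t ≤ n) (ht1 : 1 ≤ t) (c : Fin n) :
    (Ymat C D c)ᵀ * Ymat C D c = (N : ℝ) • 1 := by
  ext j j'
  simp [hD.Ymat_eq hs hC ht ht1, Matrix.mul_apply, Matrix.one_apply,
    hD.sum_coding_mul_coding hs hC ht ht1]

theorem hasStrength.transpose_Xmat_mul_Xmat (hD : hasStrength s D t) (hs : ∀ i, 0 < s i)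
    (hC : ∀ i, isNOC (C i)) (ht : t ≤ n) {V : Finset (Fin n)} (hV : V.card ≤ t) :
    (Xmat C D V)ᵀ * Xmat C D V = (N : ℝ) • 1 := by
  ext x y
  simp [hD.Xmat_eq hs hC ht hV, Matrix.mul_apply, Matrix.one_apply,
    hD.sum_intCol_mul_intCol hs hC ht hV]

theorem hasStrength.sum_coding_mul_intCol_eq_zero (hD : hasStrength s D t)
    (hs : ∀ i, 0 < s i) (hC : ∀ i, isNOC (C i)) (ht : t ≤ n) {V : Finset (Fin n)}
    (hV : V.card = t) {c : Fin n} (hc : c ∉ V) (x : FullIdx s V) (hx : x.1.1 ≠ V)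
    (j : Fin (s c - 1)) :
    ∑ r, C c (D r c) j * intCol C D x.1.1 x.2 r = 0 := by
  have hcS : c ∉ x.1.1 := fun h => hc (x.1.2.1 h)
  have hcard : (insert c x.1.1).card ≤ t := by
    rw [card_insert_of_notMem hcS, ← hV]
    exact card_lt_card (Finset.ssubset_iff_subset_ne.2 ⟨x.1.2.1, hx⟩)
  simp_rw [intCol_eq_optionCol, ← optionCol_mainEffectTuple (C := C) (D := D)]
  rw [hD.sum_optionCol_mul_optionCol hs hC ht hcard
    (fun i hi => mainEffectTuple_eq_none j fun h => hi (h ▸ mem_insert_self i _))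
    (fun i hi => optionTuple_eq_none _ fun h => hi (mem_insert_of_mem h)), if_neg]
  intro h
  simpa [mainEffectTuple, optionTuple, hcS] using congrFun h c

theorem hasStrength.exists_Ymat_eq_mul (hN : N ≠ 0) (hD : hasStrength s D t)
    (hs : ∀ i, 0 < s i) (hC : ∀ i, isNOC (C i)) (ht : t ≤ n) (ht1 : 1 ≤ t)
    (B : ∀ i, Fin (s i) → Fin (s i - 1) → ℝ) (c : Fin n) :
    ∃ T : Matrix (Fin (s c - 1)) (Fin (s c - 1)) ℝ, Ymat B D c = Ymat C D c * T := by
  rw [hD.Ymat_eq hs hC ht ht1]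
  refine Matrix.exists_eq_mul_of_col_mem_span
    (center_col_mem_span hN (hD.sum_coding_eq_zero hs hC ht ht1 c) fun j => ?_)
  obtain ⟨α, hα⟩ := (hC c).augCoding_mulVec_surjective (hs c) fun l => B c l j
  have hcol : (Matrix.of fun r j => B c (D r c) j).col j =
      α none • 1 + ∑ j', α (some j') • (Matrix.of fun r j => C c (D r c) j).col j' := by
    ext r
    simp [← congrFun hα (D r c), Matrix.mulVec, dotProduct, Fintype.sum_option, Matrix.col,
      mul_comm]
  rw [hcol]
  exact Submodule.add_mem _ (Submodule.smul_mem _ _ (Submodule.subset_span (Set.mem_insert _ _)))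
    (Submodule.sum_mem _ fun j' _ => Submodule.smul_mem _ _
      (Submodule.subset_span (Set.mem_insert_of_mem _ (Set.mem_range_self j'))))

theorem hasStrength.exists_Xmat_eq_mul (hN : N ≠ 0) (hD : hasStrength s D t)
    (hs : ∀ i, 0 < s i) (hC : ∀ i, isNOC (C i)) (ht : t ≤ n) {V : Finset (Fin n)}
    (hV : V.card ≤ t) (B : ∀ i, Fin (s i) → Fin (s i - 1) → ℝ) :
    ∃ W : Matrix (FullIdx s V) (FullIdx s V) ℝ, Xmat B D V = Xmat C D V * W := by
  rw [hD.Xmat_eq hs hC ht hV]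
  have hX : ∀ x : FullIdx s V, ∑ r, intCol C D x.1.1 x.2 r = 0 := fun x =>
    hD.sum_intCol_eq_zero hs hC ht x.1.2.2 ((card_le_card x.1.2.1).trans hV) x.2
  refine Matrix.exists_eq_mul_of_col_mem_span (center_col_mem_span hN
    (X := Matrix.of fun r (x : FullIdx s V) => intCol C D x.1.1 x.2 r) hX fun x => ?_)
  have hcol : (Matrix.of fun r (x : FullIdx s V) => intCol B D x.1.1 x.2 r).col x =
      fun r => ∏ i, augCoding (B i) (D r i) (optionTuple x.2 i) := by
    ext r
    simp [Matrix.col, intCol_eq_optionCol, optionCol]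
  rw [hcol]
  refine Submodule.span_mono ?_ (prod_mem_span_optionCol (D := D) hs hC (V := V)
    (fun i l => augCoding (B i) l (optionTuple x.2 i)) fun i hi => ?_)
  · rintro _ ⟨k, hk, rfl⟩
    by_cases hk0 : k = fun _ => none
    · rw [hk0, optionCol_none]
      exact Set.mem_insert _ _
    · obtain ⟨y, rfl⟩ := exists_optionTuple_eq hk hk0
      refine Set.mem_insert_of_mem _ ⟨y, ?_⟩
      ext r
      simp [Matrix.col, intCol_eq_optionCol]
  · ext l
    simp [optionTuple_eq_none _ fun h => hi (x.1.2.1 h)]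

theorem intCol_piEquivProdErase_symm {U : Finset (Fin n)} {c : Fin n} (hc : c ∈ U)
    (j : Fin (s c - 1)) (g : ∀ i : U.erase c, Fin (s i.1 - 1)) (r : Fin N) :
    intCol C D U ((Finset.piEquivProdErase (β := fun i => Fin (s i - 1)) hc).symm (j, g)) r =
      C c (D r c) j * intCol C D (U.erase c) g r := by
  have htuple : optionTuple ((Finset.piEquivProdErase (β := fun i => Fin (s i - 1)) hc).symm
      (j, g)) = Function.update (optionTuple g) c (some j) := by
    ext i : 1
    by_cases h : i = c
    · subst h
      simp [optionTuple, Finset.piEquivProdErase, hc]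
    · simp [optionTuple, Finset.piEquivProdErase, h]
  rw [intCol_eq_optionCol, intCol_eq_optionCol, htuple,
    optionCol_update (optionTuple_eq_none _ (notMem_erase c U)), augCoding_some]

theorem hasStrength.sum_sq_transpose_Ymat_mul_Xmat (hD : hasStrength s D t)
    (hs : ∀ i, 0 < s i) (hC : ∀ i, isNOC (C i)) (ht : t ≤ n) (ht1 : 1 ≤ t)
    {U : Finset (Fin n)} (hU : U.card = t + 1) {c : Fin n} (hc : c ∈ U) :
    ∑ j, ∑ x, ((Ymat C D c)ᵀ * Xmat C D (U.erase c)) j x ^ 2 =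
      ∑ jU : ∀ i : U, Fin (s i.1 - 1), (∑ r, intCol C D U jU r) ^ 2 := by
  have hV : (U.erase c).card = t := by simp [card_erase_of_mem hc, hU]
  have hVne : (U.erase c).Nonempty := card_pos.1 (by omega)
  rw [hD.Ymat_eq hs hC ht ht1, hD.Xmat_eq hs hC ht hV.le,
    ← (Finset.piEquivProdErase (β := fun i => Fin (s i - 1)) hc).symm.sum_comp,
    Fintype.sum_prod_type]
  refine sum_congr rfl fun j _ => ?_
  rw [Fintype.sum_sigma, sum_eq_single ⟨U.erase c, subset_rfl, hVne⟩]
  · simp [Matrix.mul_apply, intCol_piEquivProdErase_symm]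
  · intro S _ hS
    refine sum_eq_zero fun g _ => ?_
    simp [Matrix.mul_apply, hD.sum_coding_mul_intCol_eq_zero hs hC ht hV
      (notMem_erase c U) ⟨S, g⟩ fun h => hS (Subtype.ext h)]
  · simp

end Design

theorem statement6_general {N n R : ℕ} (hN : 1 ≤ N) (hR : 2 ≤ R)
    {s : Fin n → ℕ} (hs : ∀ i, 2 ≤ s i)
    (D : Fin N → ∀ i, Fin (s i)) (hD : hasStrength s D (R - 1))
    (C : ∀ i, Fin (s i) → Fin (s i - 1) → ℝ) (hC : ∀ i, isNOC (C i))
    (U : Finset (Fin n)) (hU : U.card = R) (c : Fin n) (hc : c ∈ U)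
    (B : ∀ i, Fin (s i) → Fin (s i - 1) → ℝ)
    (hYY : IsUnit ((Ymat B D c)ᵀ * Ymat B D c).det)
    (hXX : IsUnit ((Xmat B D (U.erase c))ᵀ * Xmat B D (U.erase c)).det) :
    Matrix.trace
        (((Ymat B D c)ᵀ * Ymat B D c)⁻¹ * ((Ymat B D c)ᵀ * Xmat B D (U.erase c)) *
          ((Xmat B D (U.erase c))ᵀ * Xmat B D (U.erase c))⁻¹ *
          ((Xmat B D (U.erase c))ᵀ * Ymat B D c))
      = projFreq C D U := by
  have hs' : ∀ i, 0 < s i := fun i => by have := hs i; omega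
  have ht : R - 1 ≤ n := by have := card_le_univ U; simp only [Fintype.card_fin] at this; omega
  have ht1 : 1 ≤ R - 1 := by omega
  have hV : (U.erase c).card ≤ R - 1 := by rw [card_erase_of_mem hc, hU]
  obtain ⟨T, hT⟩ := hD.exists_Ymat_eq_mul (by omega) hs' hC ht ht1 B c
  obtain ⟨W, hW⟩ := hD.exists_Xmat_eq_mul (by omega) hs' hC ht hV B
  rw [hT] at hYY
  rw [hW] at hXX
  rw [hT, hW, trace_cca_mul_eq _ _ T W (by positivity) (hD.transpose_Ymat_mul_Ymat hs' hC ht ht1 c)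
    (hD.transpose_Xmat_mul_Xmat hs' hC ht hV) hYY hXX,
    hD.sum_sq_transpose_Ymat_mul_Xmat hs' hC ht ht1 (by omega) hc, projFreq]
  ring

/-- for an arbitrary (invertible) coding `B`, the sum of the squared
canonical correlations between the centered main-effects matrix `Y` of `c` and the
centered nonconstant full-model columns `X` of `C = U \ {c}` — namely
`tr(S_yy⁻¹ S_yx S_xx⁻¹ S_xy)` — equals the projection frequency `a_R(U)` computed from
the normalized orthogonal codings. -/
theorem statement6 {N n R : ℕ} (hN : 1 ≤ N) (hR : 2 ≤ R) (hn : R ≤ n)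
    {s : Fin n → ℕ} (hs : ∀ i, 2 ≤ s i)
    (D : Fin N → ∀ i, Fin (s i)) (hD : hasStrength s D (R - 1))
    (C : ∀ i, Fin (s i) → Fin (s i - 1) → ℝ) (hC : ∀ i, isNOC (C i))
    (U : Finset (Fin n)) (hU : U.card = R) (c : Fin n) (hc : c ∈ U)
    (B : ∀ i, Fin (s i) → Fin (s i - 1) → ℝ)
    (hB : ∀ i : Fin n, Function.Bijective
      ((Matrix.of fun (l : Fin (s i)) (o : Option (Fin (s i - 1))) =>
        o.elim 1 fun j => B i l j).mulVecLin))
    (hYY : IsUnit ((Ymat B D c)ᵀ * Ymat B D c).det)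
    (hXX : IsUnit ((Xmat B D (U.erase c))ᵀ * Xmat B D (U.erase c)).det) :
    Matrix.trace
        (((Ymat B D c)ᵀ * Ymat B D c)⁻¹ * ((Ymat B D c)ᵀ * Xmat B D (U.erase c)) *
          ((Xmat B D (U.erase c))ᵀ * Xmat B D (U.erase c))⁻¹ *
          ((Xmat B D (U.erase c))ᵀ * Ymat B D c))
      = projFreq C D U :=
  statement6_general hN hR hs D hD C hC U hU c hc B hYY hXX
end
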